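/- arXiv:1301.0155 — 6 statements merged into one kernel-verified Lean document; each statement's English description precedes it below -/
import Mathlib

section
/- Let q > 1. The function x ↦ (ψ_q'(x))² + ψ_q''(x) is completely monotonic on the interval (0, ∞). -/
open Real Set Filter Topology

/-- The q-digamma function for `q > 1`:
`ψ_q(x) = −ln(q−1) + (ln q)·(x − 1/2 − ∑_{k=1}^∞ q^{−kx}/(1 − q^{−k}))`. -/
noncomputable def qDigammaGt (q x : ℝ) : ℝ :=
  -Real.log (q - 1) +
    Real.log q *
      (x - 1 / 2 - ∑' k : ℕ, q ^ (-(((k : ℝ) + 1) * x)) / (1 - q ^ (-((k : ℝ) + 1))))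

namespace CMQD

/-- Exponential series with coefficients `c`. -/
noncomputable def G (L : ℝ) (c : ℕ → ℝ) (x : ℝ) : ℝ :=
  ∑' n : ℕ, c n * Real.exp (-(n : ℝ) * L * x)

/-- Polynomially bounded coefficients. -/
def PB (c : ℕ → ℝ) : Prop := ∃ K : ℝ, ∃ p : ℕ, ∀ n : ℕ, |c n| ≤ K * ((n : ℝ) + 1) ^ p

lemma pb_nonneg {c : ℕ → ℝ} {K : ℝ} {p : ℕ} (h : ∀ n : ℕ, |c n| ≤ K * ((n : ℝ) + 1) ^ p) :
    0 ≤ K := by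
  have h0 := h 0
  simp only [Nat.cast_zero, zero_add, one_pow, mul_one] at h0
  exact (abs_nonneg _).trans h0

lemma cast_succ_bound (p : ℕ) (n : ℕ) :
    ((n : ℝ) + 1) ^ p ≤ 2 ^ p * (n : ℝ) ^ p + 1 := by
  rcases n with _ | m
  · simp
  · have h1 : ((m + 1 : ℕ) : ℝ) + 1 ≤ 2 * ((m + 1 : ℕ) : ℝ) := by push_cast; linarith
    have h2 : (((m + 1 : ℕ) : ℝ) + 1) ^ p ≤ (2 * ((m + 1 : ℕ) : ℝ)) ^ p :=
      pow_le_pow_left₀ (by positivity) h1 p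
    have h3 : (2 * ((m + 1 : ℕ) : ℝ)) ^ p = 2 ^ p * ((m + 1 : ℕ) : ℝ) ^ p := mul_pow _ _ _
    nlinarith [h2, h3]

lemma summable_poly_geometric (K : ℝ) (p : ℕ) {r : ℝ} (hr : ‖r‖ < 1) :
    Summable (fun n : ℕ => K * ((n : ℝ) + 1) ^ p * r ^ n) := by
  have h1 : Summable (fun n : ℕ => (n : ℝ) ^ p * |r| ^ n) :=
    summable_pow_mul_geometric_of_norm_lt_one p (by simpa using hr)
  have h2 : Summable (fun n : ℕ => |r| ^ n) :=
    summable_geometric_of_lt_one (abs_nonneg r) (by simpa [Real.norm_eq_abs] using hr)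
  have h3 : Summable (fun n : ℕ => |K| * 2 ^ p * ((n : ℝ) ^ p * |r| ^ n) + |K| * |r| ^ n) :=
    (h1.mul_left _).add (h2.mul_left _)
  apply Summable.of_norm_bounded h3
  intro n
  have hb := cast_succ_bound p n
  have hrn : (0 : ℝ) ≤ |r| ^ n := by positivity
  have h4 : ‖K * ((n : ℝ) + 1) ^ p * r ^ n‖ = |K| * ((n : ℝ) + 1) ^ p * |r| ^ n := by
    rw [Real.norm_eq_abs, abs_mul, abs_mul, abs_pow, abs_pow,
      abs_of_nonneg (by positivity : (0:ℝ) ≤ (n : ℝ) + 1)]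
  rw [h4]
  have h5 : |K| * ((n : ℝ) + 1) ^ p * |r| ^ n ≤ |K| * (2 ^ p * (n : ℝ) ^ p + 1) * |r| ^ n := by
    apply mul_le_mul_of_nonneg_right _ hrn
    exact mul_le_mul_of_nonneg_left hb (abs_nonneg K)
  nlinarith [h5]

lemma exp_eq_pow (L x : ℝ) (n : ℕ) :
    Real.exp (-(n : ℝ) * L * x) = Real.exp (-(L * x)) ^ n := by
  rw [← Real.exp_nat_mul]
  ring_nf

lemma norm_exp_lt_one {L x : ℝ} (hL : 0 < L) (hx : 0 < x) : ‖Real.exp (-(L * x))‖ < 1 := by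
  rw [Real.norm_eq_abs, abs_of_pos (Real.exp_pos _), Real.exp_lt_one_iff]
  nlinarith

lemma summable_aux {L x : ℝ} (hL : 0 < L) (hx : 0 < x) (K : ℝ) (p : ℕ) :
    Summable (fun n : ℕ => K * ((n : ℝ) + 1) ^ p * Real.exp (-(n : ℝ) * L * x)) := by
  have := summable_poly_geometric K p (norm_exp_lt_one hL hx)
  refine this.congr fun n => ?_
  rw [exp_eq_pow]

lemma PB.summable {L x : ℝ} {c : ℕ → ℝ} (hc : PB c) (hL : 0 < L) (hx : 0 < x) :
    Summable (fun n : ℕ => c n * Real.exp (-(n : ℝ) * L * x)) := by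
  obtain ⟨K, p, hK⟩ := hc
  apply Summable.of_norm_bounded (summable_aux hL hx K p)
  intro n
  rw [Real.norm_eq_abs, abs_mul, abs_of_pos (Real.exp_pos _)]
  exact mul_le_mul_of_nonneg_right (hK n) (Real.exp_pos _).le

lemma PB.summable_norm {L x : ℝ} {c : ℕ → ℝ} (hc : PB c) (hL : 0 < L) (hx : 0 < x) :
    Summable (fun n : ℕ => ‖c n * Real.exp (-(n : ℝ) * L * x)‖) := by
  obtain ⟨K, p, hK⟩ := hc
  refine Summable.of_nonneg_of_le (fun n => norm_nonneg _) (fun n => ?_)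
    (summable_aux hL hx K p)
  rw [Real.norm_eq_abs, abs_mul, abs_of_pos (Real.exp_pos _)]
  exact mul_le_mul_of_nonneg_right (hK n) (Real.exp_pos _).le

lemma PB.deriv {c : ℕ → ℝ} (hc : PB c) (L : ℝ) : PB (fun n => -((n : ℝ) * L) * c n) := by
  obtain ⟨K, p, hK⟩ := hc
  have hK0 : 0 ≤ K := pb_nonneg hK
  refine ⟨K * |L|, p + 1, fun n => ?_⟩
  have h1 : |(-((n : ℝ) * L)) * c n| = (n : ℝ) * |L| * |c n| := by
    rw [abs_mul, abs_neg, abs_mul, abs_of_nonneg (Nat.cast_nonneg n)]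
  rw [h1]
  have h2 : (n : ℝ) * |L| * |c n| ≤ (n : ℝ) * |L| * (K * ((n : ℝ) + 1) ^ p) :=
    mul_le_mul_of_nonneg_left (hK n) (by positivity)
  have h3 : ((n : ℝ) + 1) ^ (p + 1) = ((n : ℝ) + 1) ^ p * ((n : ℝ) + 1) := pow_succ _ _
  have h4 : (n : ℝ) * |L| * (K * ((n : ℝ) + 1) ^ p)
      ≤ ((n : ℝ) + 1) * |L| * (K * ((n : ℝ) + 1) ^ p) := by
    apply mul_le_mul_of_nonneg_right _ (by positivity)
    apply mul_le_mul_of_nonneg_right _ (abs_nonneg L)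
    linarith
  have h5 : ((n : ℝ) + 1) * |L| * (K * ((n : ℝ) + 1) ^ p)
      = K * |L| * ((n : ℝ) + 1) ^ (p + 1) := by rw [h3]; ring
  linarith


lemma hasDerivAt_G {L x : ℝ} {c : ℕ → ℝ} (hc : PB c) (hL : 0 < L) (hx : 0 < x) :
    HasDerivAt (G L c) (G L (fun n => -((n : ℝ) * L) * c n) x) x := by
  obtain ⟨K, p, hK⟩ := hc
  have hK0 : 0 ≤ K := pb_nonneg hK
  have H := hasDerivAt_tsum_of_isPreconnected
    (u := fun n : ℕ => K * |L| * ((n : ℝ) + 1) ^ (p + 1) * Real.exp (-(n : ℝ) * L * (x / 2)))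
    (g := fun (n : ℕ) (y : ℝ) => c n * Real.exp (-(n : ℝ) * L * y))
    (g' := fun (n : ℕ) (y : ℝ) => -((n : ℝ) * L) * c n * Real.exp (-(n : ℝ) * L * y))
    (t := Set.Ioi (x / 2)) (y₀ := x) (y := x)
    (summable_aux hL (by linarith) (K * |L|) (p + 1)) isOpen_Ioi (isPreconnected_Ioi)
    ?_ ?_ (by simp only [Set.mem_Ioi]; linarith) ?_ (by simp only [Set.mem_Ioi]; linarith)
  · exact H
  · intro n y _
    have h1 : HasDerivAt (fun z : ℝ => -(n : ℝ) * L * z) (-(n : ℝ) * L) y := by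
      simpa using (hasDerivAt_id y).const_mul (-(n : ℝ) * L)
    have h2 : HasDerivAt (fun z : ℝ => c n * Real.exp (-(n : ℝ) * L * z))
        (c n * (Real.exp (-(n : ℝ) * L * y) * (-(n : ℝ) * L))) y := (h1.exp).const_mul (c n)
    show HasDerivAt (fun z : ℝ => c n * Real.exp (-(n : ℝ) * L * z))
      (-((n : ℝ) * L) * c n * Real.exp (-(n : ℝ) * L * y)) y
    convert h2 using 1
    ring
  · intro n y hy
    have hy' : x / 2 ≤ y := le_of_lt hy
    have e1 : Real.exp (-(n : ℝ) * L * y) ≤ Real.exp (-(n : ℝ) * L * (x / 2)) := by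
      apply Real.exp_le_exp.2
      have hn : (0 : ℝ) ≤ (n : ℝ) := Nat.cast_nonneg n
      nlinarith [mul_nonneg (mul_nonneg hn hL.le) (sub_nonneg.2 hy')]
    have h1 : ‖-((n : ℝ) * L) * c n * Real.exp (-(n : ℝ) * L * y)‖
        = (n : ℝ) * |L| * |c n| * Real.exp (-(n : ℝ) * L * y) := by
      rw [Real.norm_eq_abs, abs_mul, abs_mul, abs_neg, abs_mul,
        abs_of_nonneg (Nat.cast_nonneg n), abs_of_pos (Real.exp_pos _)]
    rw [h1]
    have e2 : |c n| * Real.exp (-(n : ℝ) * L * y)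
        ≤ (K * ((n : ℝ) + 1) ^ p) * Real.exp (-(n : ℝ) * L * (x / 2)) :=
      mul_le_mul (hK n) e1 (Real.exp_pos _).le (by positivity)
    have e3 : (n : ℝ) * |L| * (|c n| * Real.exp (-(n : ℝ) * L * y))
        ≤ (n : ℝ) * |L| * ((K * ((n : ℝ) + 1) ^ p) * Real.exp (-(n : ℝ) * L * (x / 2))) :=
      mul_le_mul_of_nonneg_left e2 (by positivity)
    have e4 : (n : ℝ) * |L| * ((K * ((n : ℝ) + 1) ^ p) * Real.exp (-(n : ℝ) * L * (x / 2)))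
        ≤ ((n : ℝ) + 1) * |L| * ((K * ((n : ℝ) + 1) ^ p) * Real.exp (-(n : ℝ) * L * (x / 2))) := by
      apply mul_le_mul_of_nonneg_right _ (by positivity)
      apply mul_le_mul_of_nonneg_right _ (abs_nonneg L)
      linarith
    have e5 : ((n : ℝ) + 1) * |L| * ((K * ((n : ℝ) + 1) ^ p) * Real.exp (-(n : ℝ) * L * (x / 2)))
        = K * |L| * ((n : ℝ) + 1) ^ (p + 1) * Real.exp (-(n : ℝ) * L * (x / 2)) := by
      rw [pow_succ]; ring
    nlinarith [e3, e4, e5]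
  · exact PB.summable ⟨K, p, hK⟩ hL hx

lemma PB.iter {c : ℕ → ℝ} (hc : PB c) (L : ℝ) :
    ∀ j : ℕ, PB (fun n => (-((n : ℝ) * L)) ^ j * c n)
  | 0 => by simpa using hc
  | (j + 1) => by
    obtain ⟨K, p, hK⟩ := (PB.iter hc L j).deriv L
    refine ⟨K, p, fun n => ?_⟩
    have h : (-((n : ℝ) * L)) ^ (j + 1) * c n
        = -((n : ℝ) * L) * ((-((n : ℝ) * L)) ^ j * c n) := by rw [pow_succ]; ring
    show |(-((n : ℝ) * L)) ^ (j + 1) * c n| ≤ _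
    rw [h]
    simpa using hK n

lemma iter_eq {L : ℝ} {c : ℕ → ℝ} (hc : PB c) (hL : 0 < L) (j : ℕ) :
    Set.EqOn (iteratedDerivWithin j (G L c) (Set.Ioi 0))
      (G L (fun n => (-((n : ℝ) * L)) ^ j * c n)) (Set.Ioi 0) := by
  induction j with
  | zero =>
    intro x _
    rw [iteratedDerivWithin_zero]
    unfold G
    exact tsum_congr fun n => by simp
  | succ j IH =>
    intro x hx
    rw [iteratedDerivWithin_succ,
      derivWithin_congr IH (IH hx), derivWithin_of_isOpen isOpen_Ioi hx,
      (hasDerivAt_G (hc.iter L j) hL hx).deriv]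
    unfold G
    exact tsum_congr fun n => by simp only [pow_succ]; ring

lemma sign_iter {L : ℝ} {c : ℕ → ℝ} (hnn : ∀ n, 0 ≤ c n) (hL : 0 < L) (j : ℕ) (x : ℝ) :
    0 ≤ (-1 : ℝ) ^ j * G L (fun n => (-((n : ℝ) * L)) ^ j * c n) x := by
  unfold G
  rw [← tsum_mul_left]
  apply tsum_nonneg
  intro n
  have hbase : ((-1 : ℝ)) ^ j * (-((n : ℝ) * L)) ^ j = ((n : ℝ) * L) ^ j := by
    rw [← mul_pow, neg_mul_neg, one_mul]
  have h1 : (-1 : ℝ) ^ j * ((-((n : ℝ) * L)) ^ j * c n * Real.exp (-(n : ℝ) * L * x))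
      = ((n : ℝ) * L) ^ j * (c n * Real.exp (-(n : ℝ) * L * x)) := by
    rw [← hbase]; ring
  rw [h1]
  have := hnn n
  positivity

lemma analyticOnNhd_G {L : ℝ} {c : ℕ → ℝ} (hc : PB c) (hL : 0 < L) :
    AnalyticOnNhd ℝ (G L c) (Set.Ioi 0) := by
  obtain ⟨K, p, hK⟩ := hc
  have hK0 : 0 ≤ K := pb_nonneg hK
  set P : FormalMultilinearSeries ℝ ℝ ℝ := FormalMultilinearSeries.ofScalars ℝ c with hP
  have hrad : (1 : ENNReal) ≤ P.radius := by
    apply ENNReal.le_of_forall_nnreal_lt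
    intro r hr
    apply P.le_radius_of_summable_norm
    have hr1 : ‖(r : ℝ)‖ < 1 := by
      rw [Real.norm_eq_abs, abs_of_nonneg r.coe_nonneg]
      exact_mod_cast hr
    refine Summable.of_nonneg_of_le (fun n => by positivity) (fun n => ?_)
      (summable_poly_geometric K p hr1)
    rw [FormalMultilinearSeries.ofScalars_norm]
    apply mul_le_mul_of_nonneg_right _ (by positivity)
    simpa using hK n
  have hball : HasFPowerSeriesOnBall P.sum P 0 P.radius :=
    P.hasFPowerSeriesOnBall (lt_of_lt_of_le one_pos hrad)
  have hA : AnalyticOnNhd ℝ P.sum (Metric.eball 0 P.radius) := hball.analyticOnNhd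
  intro x hx
  have hx0 : 0 < x := hx
  have h1 : AnalyticAt ℝ (fun y : ℝ => Real.exp (-(L * y))) x := by
    apply analyticAt_rexp.comp
    exact (((analyticAt_const (v := L)).mul analyticAt_id).neg)
  have hmem : Real.exp (-(L * x)) ∈ Metric.eball (0 : ℝ) P.radius := by
    rw [Metric.mem_eball, edist_zero_right]
    have hlt : (‖Real.exp (-(L * x))‖₊ : ENNReal) < 1 := by
      rw [← ENNReal.coe_one, ENNReal.coe_lt_coe, ← NNReal.coe_lt_coe, coe_nnnorm]
      simpa using norm_exp_lt_one hL hx0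
    exact lt_of_lt_of_le hlt hrad
  have h2 : AnalyticAt ℝ P.sum (Real.exp (-(L * x))) := hA _ hmem
  have h3 : AnalyticAt ℝ (P.sum ∘ fun y : ℝ => Real.exp (-(L * y))) x := h2.comp_of_eq h1 rfl
  have key : ∀ y : ℝ, P.sum (Real.exp (-(L * y))) = G L c y := by
    intro y
    have h4 : P.sum (Real.exp (-(L * y))) = ∑' n : ℕ, c n • (Real.exp (-(L * y))) ^ n :=
      FormalMultilinearSeries.ofScalars_sum_eq (E := ℝ) c _
    rw [h4]
    unfold G
    exact tsum_congr fun n => by rw [smul_eq_mul, ← exp_eq_pow]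
  refine h3.congr (Filter.Eventually.of_forall fun y => ?_)
  show P.sum (Real.exp (-(L * y))) = G L c y
  exact key y

lemma contDiffOn_G {L : ℝ} {c : ℕ → ℝ} (hc : PB c) (hL : 0 < L) :
    ContDiffOn ℝ (⊤ : ℕ∞) (G L c) (Set.Ioi 0) :=
  (analyticOnNhd_G hc hL).contDiffOn (uniqueDiffOn_Ioi 0)


/-! ### Coefficients for the q-digamma problem -/

noncomputable def dd (L : ℝ) (n : ℕ) : ℝ := (1 - Real.exp (-(n : ℝ) * L))⁻¹

noncomputable def c0 (L : ℝ) : ℕ → ℝ := fun n => if n = 0 then 0 else dd L n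

noncomputable def c1 (L : ℝ) : ℕ → ℝ := fun n => if n = 0 then L else L ^ 2 * n * dd L n

noncomputable def c2 (L : ℝ) : ℕ → ℝ := fun n => -((n : ℝ) * L) * c1 L n

noncomputable def CC (L : ℝ) : ℕ → ℝ :=
  fun n => (∑ kl ∈ Finset.HasAntidiagonal.antidiagonal n, c1 L kl.1 * c1 L kl.2) + c2 L n

lemma expo_pos {L : ℝ} (hL : 0 < L) {n : ℕ} (hn : 1 ≤ n) :
    0 < 1 - Real.exp (-(n : ℝ) * L) := by
  have hn1 : (1 : ℝ) ≤ (n : ℝ) := by exact_mod_cast hn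
  have : Real.exp (-(n : ℝ) * L) < 1 := by
    rw [Real.exp_lt_one_iff]
    nlinarith
  linarith

lemma dd_pos {L : ℝ} (hL : 0 < L) {n : ℕ} (hn : 1 ≤ n) : 0 < dd L n :=
  inv_pos.2 (expo_pos hL hn)

lemma dd_le_dd_one {L : ℝ} (hL : 0 < L) {n : ℕ} (hn : 1 ≤ n) : dd L n ≤ dd L 1 := by
  have hn1 : (1 : ℝ) ≤ (n : ℝ) := by exact_mod_cast hn
  have h1 : Real.exp (-(n : ℝ) * L) ≤ Real.exp (-(1 : ℝ) * L) := by
    apply Real.exp_le_exp.2; nlinarith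
  have h2 : 0 < 1 - Real.exp (-(1 : ℝ) * L) := by
    simpa using expo_pos hL (le_refl 1)
  unfold dd
  push_cast
  exact inv_anti₀ h2 (by linarith)

lemma key_mono (s : ℝ) (hs : 0 ≤ s) : (2 - s) * Real.exp s ≤ 2 + s := by
  have hder : ∀ u : ℝ, HasDerivAt (fun v : ℝ => 2 + v - (2 - v) * Real.exp v)
      (1 - (1 - u) * Real.exp u) u := by
    intro u
    have h1 : HasDerivAt (fun v : ℝ => (2 - v) * Real.exp v)
        ((-1) * Real.exp u + (2 - u) * Real.exp u) u :=
      ((hasDerivAt_id u).const_sub 2).mul (Real.hasDerivAt_exp u)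
    have h2 : HasDerivAt (fun v : ℝ => 2 + v) 1 u := by
      simpa using (hasDerivAt_id u).const_add 2
    have h3 : HasDerivAt (fun v : ℝ => 2 + v - (2 - v) * Real.exp v)
        (1 - ((-1) * Real.exp u + (2 - u) * Real.exp u)) u := h2.sub h1
    convert h3 using 1
    ring
  have hmono : MonotoneOn (fun v : ℝ => 2 + v - (2 - v) * Real.exp v) (Set.Ici 0) := by
    apply monotoneOn_of_deriv_nonneg (convex_Ici 0)
    · apply Continuous.continuousOn
      continuity
    · intro x _
      exact (hder x).differentiableAt.differentiableWithinAt
    · intro x _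
      rw [(hder x).deriv]
      have h5 := Real.add_one_le_exp (-x)
      have h6 : Real.exp (-x) * Real.exp x = 1 := by
        rw [← Real.exp_add]; simp
      nlinarith [Real.exp_pos x]
  have h0 := hmono (Set.self_mem_Ici) (Set.mem_Ici.2 hs) hs
  simp only [Real.exp_zero] at h0
  nlinarith [h0]

lemma key_ineq {s : ℝ} (hs : 0 < s) : 1 / s + 1 / 2 ≤ (1 - Real.exp (-s))⁻¹ := by
  have hE : 1 < Real.exp s := by
    rw [← Real.exp_zero]; exact Real.exp_lt_exp.2 hs
  have hEpos : 0 < Real.exp s := Real.exp_pos s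
  have hexp : Real.exp (-s) = (Real.exp s)⁻¹ := Real.exp_neg s
  have h3 : 0 < 1 - Real.exp (-s) := by
    rw [hexp]
    have h4 : (Real.exp s)⁻¹ < 1 := by
      rw [inv_lt_one_iff₀]; right; exact hE
    linarith
  have hk := key_mono s hs.le
  rw [← sub_nonneg]
  have hE1 : Real.exp s - 1 ≠ 0 := ne_of_gt (by linarith)
  have h1E : 1 - (Real.exp s)⁻¹ ≠ 0 := by rw [← hexp]; exact ne_of_gt h3
  have heq : (1 - Real.exp (-s))⁻¹ - (1 / s + 1 / 2)
      = ((2 + s) - (2 - s) * Real.exp s) / (2 * s * (Real.exp s - 1)) := by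
    rw [hexp]
    rw [eq_div_iff (ne_of_gt (mul_pos (by positivity : (0:ℝ) < 2 * s)
      (by linarith : (0:ℝ) < Real.exp s - 1)))]
    field_simp
    ring
  rw [heq]
  apply div_nonneg (by linarith)
  nlinarith

lemma dd_ge {L : ℝ} (hL : 0 < L) {n : ℕ} (hn : 1 ≤ n) :
    2 + (n : ℝ) * L ≤ 2 * ((n : ℝ) * L) * dd L n := by
  have hn1 : (1 : ℝ) ≤ (n : ℝ) := by exact_mod_cast hn
  have hs : 0 < (n : ℝ) * L := by nlinarith
  have h := key_ineq hs
  have h2 := mul_le_mul_of_nonneg_left h (le_of_lt (by positivity : (0:ℝ) < 2 * ((n : ℝ) * L)))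
  have h3 : 2 * ((n : ℝ) * L) * (1 / ((n : ℝ) * L) + 1 / 2) = 2 + (n : ℝ) * L := by
    field_simp
  have h4 : dd L n = (1 - Real.exp (-((n : ℝ) * L)))⁻¹ := by
    unfold dd; rw [neg_mul]
  rw [h4]
  linarith

lemma dd_identity {L : ℝ} (hL : 0 < L) {i j n : ℕ} (hi : 1 ≤ i) (hj : 1 ≤ j)
    (hij : i + j = n) : dd L i * dd L j = dd L n * (dd L i + dd L j - 1) := by
  have hab : Real.exp (-(n : ℝ) * L) = Real.exp (-(i : ℝ) * L) * Real.exp (-(j : ℝ) * L) := by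
    rw [← Real.exp_add]
    congr 1
    rw [← hij]
    push_cast
    ring
  have hAi := expo_pos hL hi
  have hAj := expo_pos hL hj
  have hAn := expo_pos hL (hij ▸ (by omega : 1 ≤ i + j))
  have key : ∀ a b : ℝ, 0 < 1 - a → 0 < 1 - b → 0 < 1 - a * b →
      (1 - a)⁻¹ * (1 - b)⁻¹ = (1 - a * b)⁻¹ * ((1 - a)⁻¹ + (1 - b)⁻¹ - 1) := by
    intro a b ha hb hab2
    have h1 : 1 - a ≠ 0 := ne_of_gt ha
    have h2 : 1 - b ≠ 0 := ne_of_gt hb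
    have h3 : 1 - a * b ≠ 0 := ne_of_gt hab2
    field_simp
    ring
  unfold dd
  rw [hab] at hAn ⊢
  exact key _ _ hAi hAj hAn

lemma pb_c0 {L : ℝ} (hL : 0 < L) : PB (c0 L) := by
  refine ⟨dd L 1, 0, fun n => ?_⟩
  simp only [pow_zero, mul_one]
  unfold c0
  rcases Nat.eq_zero_or_pos n with rfl | hn
  · simp
    exact (dd_pos hL (le_refl 1)).le
  · rw [if_neg (by omega)]
    rw [abs_of_pos (dd_pos hL hn)]
    exact dd_le_dd_one hL hn

lemma pb_c1 {L : ℝ} (hL : 0 < L) : PB (c1 L) := by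
  refine ⟨L + L ^ 2 * dd L 1, 1, fun n => ?_⟩
  simp only [pow_one]
  unfold c1
  have hdd1 := dd_pos hL (le_refl 1)
  rcases Nat.eq_zero_or_pos n with rfl | hn
  · simp
    rw [abs_of_pos hL]
    nlinarith
  · rw [if_neg (by omega)]
    have hddn := dd_pos hL hn
    have hdle := dd_le_dd_one hL hn
    rw [abs_of_pos (by positivity : 0 < L ^ 2 * (n : ℝ) * dd L n)]
    have hn0 : (0:ℝ) ≤ (n : ℝ) := Nat.cast_nonneg n
    nlinarith [mul_le_mul_of_nonneg_left hdle (by positivity : (0:ℝ) ≤ L ^ 2 * (n : ℝ))]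

lemma pb_c2 {L : ℝ} (hL : 0 < L) : PB (c2 L) := (pb_c1 hL).deriv L

lemma pb_add {c c' : ℕ → ℝ} (hc : PB c) (hc' : PB c') : PB (fun n => c n + c' n) := by
  obtain ⟨K, p, hK⟩ := hc
  obtain ⟨K', p', hK'⟩ := hc'
  have hK0 : 0 ≤ K := pb_nonneg hK
  have hK0' : 0 ≤ K' := pb_nonneg hK'
  refine ⟨K + K', max p p', fun n => ?_⟩
  have hbase : (1 : ℝ) ≤ (n : ℝ) + 1 := by
    have : (0:ℝ) ≤ (n : ℝ) := Nat.cast_nonneg n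
    linarith
  have e1 : ((n : ℝ) + 1) ^ p ≤ ((n : ℝ) + 1) ^ max p p' :=
    pow_le_pow_right₀ hbase (le_max_left _ _)
  have e2 : ((n : ℝ) + 1) ^ p' ≤ ((n : ℝ) + 1) ^ max p p' :=
    pow_le_pow_right₀ hbase (le_max_right _ _)
  calc |c n + c' n| ≤ |c n| + |c' n| := abs_add_le _ _
    _ ≤ K * ((n : ℝ) + 1) ^ p + K' * ((n : ℝ) + 1) ^ p' := add_le_add (hK n) (hK' n)
    _ ≤ (K + K') * ((n : ℝ) + 1) ^ max p p' := by nlinarith [e1, e2]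

lemma pb_Csq {L : ℝ} (hL : 0 < L) :
    PB (fun n => ∑ kl ∈ Finset.HasAntidiagonal.antidiagonal n, c1 L kl.1 * c1 L kl.2) := by
  obtain ⟨K, p, hK⟩ := pb_c1 hL
  have hK0 : 0 ≤ K := pb_nonneg hK
  refine ⟨K ^ 2, 2 * p + 1, fun n => ?_⟩
  have hterm : ∀ kl ∈ Finset.HasAntidiagonal.antidiagonal n,
      |c1 L kl.1 * c1 L kl.2| ≤ K ^ 2 * ((n : ℝ) + 1) ^ (2 * p) := by
    intro kl hkl
    have hkl' : kl.1 + kl.2 = n := Finset.HasAntidiagonal.mem_antidiagonal.1 hkl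
    have h1 : ((kl.1 : ℝ) + 1) ≤ ((n : ℝ) + 1) := by
      have : kl.1 ≤ n := by omega
      have := (Nat.cast_le (α := ℝ)).2 this
      linarith
    have h2 : ((kl.2 : ℝ) + 1) ≤ ((n : ℝ) + 1) := by
      have : kl.2 ≤ n := by omega
      have := (Nat.cast_le (α := ℝ)).2 this
      linarith
    have hb1 : |c1 L kl.1| ≤ K * ((n : ℝ) + 1) ^ p :=
      (hK kl.1).trans (mul_le_mul_of_nonneg_left
        (pow_le_pow_left₀ (by positivity) h1 p) hK0)
    have hb2 : |c1 L kl.2| ≤ K * ((n : ℝ) + 1) ^ p :=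
      (hK kl.2).trans (mul_le_mul_of_nonneg_left
        (pow_le_pow_left₀ (by positivity) h2 p) hK0)
    rw [abs_mul]
    calc |c1 L kl.1| * |c1 L kl.2| ≤ (K * ((n : ℝ) + 1) ^ p) * (K * ((n : ℝ) + 1) ^ p) :=
          mul_le_mul hb1 hb2 (abs_nonneg _) (by positivity)
      _ = K ^ 2 * ((n : ℝ) + 1) ^ (2 * p) := by rw [two_mul, pow_add]; ring
  have hsum : |∑ kl ∈ Finset.HasAntidiagonal.antidiagonal n, c1 L kl.1 * c1 L kl.2|
      ≤ ((n : ℝ) + 1) * (K ^ 2 * ((n : ℝ) + 1) ^ (2 * p)) := by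
    calc |∑ kl ∈ Finset.HasAntidiagonal.antidiagonal n, c1 L kl.1 * c1 L kl.2|
        ≤ ∑ kl ∈ Finset.HasAntidiagonal.antidiagonal n, |c1 L kl.1 * c1 L kl.2| :=
          Finset.abs_sum_le_sum_abs _ _
      _ ≤ (Finset.HasAntidiagonal.antidiagonal n).card • (K ^ 2 * ((n : ℝ) + 1) ^ (2 * p)) :=
          Finset.sum_le_card_nsmul _ _ _ hterm
      _ = ((n : ℝ) + 1) * (K ^ 2 * ((n : ℝ) + 1) ^ (2 * p)) := by
          rw [Finset.Nat.card_antidiagonal, nsmul_eq_mul]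
          push_cast
          ring
  refine hsum.trans (le_of_eq ?_)
  rw [pow_succ]
  ring

lemma pb_CC {L : ℝ} (hL : 0 < L) : PB (CC L) := pb_add (pb_Csq hL) (pb_c2 hL)

lemma CC_nonneg {L : ℝ} (hL : 0 < L) (n : ℕ) : 0 ≤ CC L n := by
  rcases Nat.eq_zero_or_pos n with rfl | hn
  · unfold CC c2 c1
    simp
    positivity
  · have hterm : ∀ kl ∈ Finset.HasAntidiagonal.antidiagonal n,
        L ^ 3 * (n : ℝ) * dd L n ≤ c1 L kl.1 * c1 L kl.2 := by
      intro kl hkl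
      have hkl' : kl.1 + kl.2 = n := Finset.HasAntidiagonal.mem_antidiagonal.1 hkl
      rcases Nat.eq_zero_or_pos kl.1 with h1 | h1
      · have h2 : kl.2 = n := by omega
        have hn0 : n ≠ 0 := by omega
        rw [h1, h2]
        unfold c1
        rw [if_pos rfl, if_neg hn0]
        apply le_of_eq
        ring
      · rcases Nat.eq_zero_or_pos kl.2 with h2 | h2
        · have h3 : kl.1 = n := by omega
          have hn0 : n ≠ 0 := by omega
          rw [h2, h3]
          unfold c1
          rw [if_pos rfl, if_neg hn0]
          apply le_of_eq
          ring
        · -- both ≥ 1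
          have hi1 : (1:ℝ) ≤ (kl.1 : ℝ) := by exact_mod_cast h1
          have hj1 : (1:ℝ) ≤ (kl.2 : ℝ) := by exact_mod_cast h2
          have hin : (kl.1 : ℝ) + (kl.2 : ℝ) = (n : ℝ) := by exact_mod_cast hkl'
          have hid := dd_identity hL h1 h2 hkl'
          have hki := dd_ge hL h1
          have hkj := dd_ge hL h2
          have hddi := dd_pos hL h1
          have hddj := dd_pos hL h2
          have hddn := dd_pos hL hn
          unfold c1
          rw [if_neg (by omega), if_neg (by omega)]
          have hA := mul_le_mul_of_nonneg_left hki (by positivity : (0:ℝ) ≤ (kl.2 : ℝ))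
          have hB := mul_le_mul_of_nonneg_left hkj (by positivity : (0:ℝ) ≤ (kl.1 : ℝ))
          have h5 : (kl.1 : ℝ) + (kl.2 : ℝ)
              ≤ (kl.1 : ℝ) * (kl.2 : ℝ) * L * (dd L kl.1 + dd L kl.2 - 1) := by
            nlinarith [hA, hB]
          have h6 : (0:ℝ) ≤ L ^ 3 * dd L n := by positivity
          calc L ^ 3 * (n : ℝ) * dd L n
              = L ^ 3 * dd L n * ((kl.1:ℝ) + (kl.2:ℝ)) := by rw [← hin]; ring
            _ ≤ L ^ 3 * dd L n * ((kl.1:ℝ) * (kl.2:ℝ) * L * (dd L kl.1 + dd L kl.2 - 1)) :=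
                mul_le_mul_of_nonneg_left h5 h6
            _ = L ^ 4 * (kl.1:ℝ) * (kl.2:ℝ) * (dd L n * (dd L kl.1 + dd L kl.2 - 1)) := by
                ring
            _ = L ^ 4 * (kl.1:ℝ) * (kl.2:ℝ) * (dd L kl.1 * dd L kl.2) := by rw [← hid]
            _ = L ^ 2 * (kl.1:ℝ) * dd L kl.1 * (L ^ 2 * (kl.2:ℝ) * dd L kl.2) := by ring
    have hsum := Finset.card_nsmul_le_sum (Finset.HasAntidiagonal.antidiagonal n)
      (fun kl => c1 L kl.1 * c1 L kl.2) _ hterm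
    rw [Finset.Nat.card_antidiagonal, nsmul_eq_mul] at hsum
    have hn1 : (1:ℝ) ≤ (n : ℝ) := by exact_mod_cast hn
    have hddn := dd_pos hL hn
    have hc2 : c2 L n = -(L ^ 3 * (n : ℝ) ^ 2 * dd L n) := by
      unfold c2 c1
      rw [if_neg (by omega)]
      ring
    unfold CC
    rw [hc2]
    push_cast at hsum
    nlinarith [hsum, mul_nonneg (mul_nonneg (pow_nonneg hL.le 3)
      (by linarith : (0:ℝ) ≤ (n:ℝ))) hddn.le]


/-! ### Connecting to `qDigammaGt` -/

variable {q : ℝ}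

lemma tsum_part (hq : 1 < q) (x : ℝ) :
    (∑' k : ℕ, q ^ (-(((k : ℝ) + 1) * x)) / (1 - q ^ (-((k : ℝ) + 1))))
      = ∑' k : ℕ, c0 (Real.log q) (k + 1) * Real.exp (-((k + 1 : ℕ) : ℝ) * Real.log q * x) := by
  apply tsum_congr
  intro k
  have hq0 : (0:ℝ) < q := lt_trans one_pos hq
  rw [Real.rpow_def_of_pos hq0, Real.rpow_def_of_pos hq0]
  unfold c0 dd
  rw [if_neg (Nat.succ_ne_zero k)]
  have e1 : Real.log q * (-(((k : ℝ) + 1) * x)) = -((k + 1 : ℕ) : ℝ) * Real.log q * x := by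
    push_cast; ring
  have e2 : Real.log q * (-((k : ℝ) + 1)) = -((k + 1 : ℕ) : ℝ) * Real.log q := by
    push_cast; ring
  rw [e1, e2, div_eq_mul_inv]
  ring

lemma psi_eq (hq : 1 < q) {x : ℝ} (hx : 0 < x) :
    qDigammaGt q x = (-Real.log (q - 1) - Real.log q / 2) + Real.log q * x
      - Real.log q * G (Real.log q) (c0 (Real.log q)) x := by
  have hL : 0 < Real.log q := Real.log_pos hq
  have hsum : Summable (fun n : ℕ => c0 (Real.log q) n * Real.exp (-(n : ℝ) * Real.log q * x)) :=
    (pb_c0 hL).summable hL hx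
  have hG : G (Real.log q) (c0 (Real.log q)) x
      = ∑' k : ℕ, q ^ (-(((k : ℝ) + 1) * x)) / (1 - q ^ (-((k : ℝ) + 1))) := by
    unfold G
    rw [Summable.tsum_eq_zero_add hsum, tsum_part hq x]
    simp [c0]
  unfold qDigammaGt
  rw [← hG]
  ring

lemma hasDerivAt_psi (hq : 1 < q) {x : ℝ} (hx : 0 < x) :
    HasDerivAt (qDigammaGt q) (G (Real.log q) (c1 (Real.log q)) x) x := by
  have hL : 0 < Real.log q := Real.log_pos hq
  have hev : (fun y => (-Real.log (q - 1) - Real.log q / 2) + Real.log q * y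
      - Real.log q * G (Real.log q) (c0 (Real.log q)) y) =ᶠ[𝓝 x] qDigammaGt q := by
    filter_upwards [isOpen_Ioi.mem_nhds (Set.mem_Ioi.2 hx)] with y hy
    exact (psi_eq hq hy).symm
  have hder : HasDerivAt (fun y => (-Real.log (q - 1) - Real.log q / 2) + Real.log q * y
      - Real.log q * G (Real.log q) (c0 (Real.log q)) y)
      (Real.log q - Real.log q *
        G (Real.log q) (fun n => -((n:ℝ) * Real.log q) * c0 (Real.log q) n) x) x := by
    have h1 : HasDerivAt (fun y : ℝ => (-Real.log (q - 1) - Real.log q / 2) + Real.log q * y)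
        (Real.log q) x := by
      simpa using ((hasDerivAt_id x).const_mul (Real.log q)).const_add
        (-Real.log (q - 1) - Real.log q / 2)
    have h2 := (hasDerivAt_G (pb_c0 hL) hL hx).const_mul (Real.log q)
    have h3 : HasDerivAt (fun y => (-Real.log (q - 1) - Real.log q / 2) + Real.log q * y
      - Real.log q * G (Real.log q) (c0 (Real.log q)) y)
      (Real.log q - Real.log q * G (Real.log q) (fun n => -((n:ℝ) * Real.log q) * c0 (Real.log q) n) x) x :=
      h1.sub h2
    simpa using h3
  have hval : Real.log q - Real.log q *
      G (Real.log q) (fun n => -((n:ℝ) * Real.log q) * c0 (Real.log q) n) x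
      = G (Real.log q) (c1 (Real.log q)) x := by
    have hs0 : Summable (fun n : ℕ =>
        (-((n:ℝ) * Real.log q) * c0 (Real.log q) n) * Real.exp (-(n:ℝ) * Real.log q * x)) :=
      ((pb_c0 hL).deriv (Real.log q)).summable hL hx
    have hs1 : Summable (fun n : ℕ => c1 (Real.log q) n * Real.exp (-(n:ℝ) * Real.log q * x)) :=
      (pb_c1 hL).summable hL hx
    unfold G
    rw [← tsum_mul_left (a := Real.log q)]
    rw [Summable.tsum_eq_zero_add hs1, Summable.tsum_eq_zero_add (hs0.mul_left (Real.log q))]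
    rw [sub_eq_add_neg]
    have h00 : c1 (Real.log q) 0 * Real.exp (-((0:ℕ) : ℝ) * Real.log q * x) = Real.log q := by
      simp [c1]
    have h01 : Real.log q * (-(((0:ℕ) : ℝ) * Real.log q) * c0 (Real.log q) 0
        * Real.exp (-((0:ℕ) : ℝ) * Real.log q * x)) = 0 := by
      simp [c0]
    rw [h00, h01, zero_add]
    congr 1
    rw [← tsum_neg]
    apply tsum_congr
    intro b
    simp only [c0, c1, Nat.succ_ne_zero, if_false, ite_false, reduceIte]
    push_cast
    ring
  rw [← hval]
  exact hder.congr_of_eventuallyEq hev.symm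


lemma deriv_psi_eq (hq : 1 < q) :
    Set.EqOn (deriv (qDigammaGt q)) (G (Real.log q) (c1 (Real.log q))) (Set.Ioi 0) :=
  fun _ hx => (hasDerivAt_psi hq hx).deriv

lemma deriv2_psi_eq (hq : 1 < q) :
    Set.EqOn (deriv (deriv (qDigammaGt q))) (G (Real.log q) (c2 (Real.log q))) (Set.Ioi 0) := by
  intro x hx
  have hL : 0 < Real.log q := Real.log_pos hq
  have hev : deriv (qDigammaGt q) =ᶠ[𝓝 x] G (Real.log q) (c1 (Real.log q)) := by
    filter_upwards [isOpen_Ioi.mem_nhds hx] with y hy using deriv_psi_eq hq hy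
  rw [hev.deriv_eq]
  exact (hasDerivAt_G (pb_c1 hL) hL hx).deriv

lemma F_eq (hq : 1 < q) :
    Set.EqOn (fun x => (deriv (qDigammaGt q) x) ^ 2 + deriv (deriv (qDigammaGt q)) x)
      (G (Real.log q) (CC (Real.log q))) (Set.Ioi 0) := by
  intro x hx
  have hL : 0 < Real.log q := Real.log_pos hq
  have hx0 : 0 < x := hx
  simp only
  rw [deriv_psi_eq hq hx, deriv2_psi_eq hq hx]
  have hs1n : Summable (fun n : ℕ => ‖c1 (Real.log q) n * Real.exp (-(n:ℝ) * Real.log q * x)‖) :=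
    (pb_c1 hL).summable_norm hL hx0
  have hsq : (G (Real.log q) (c1 (Real.log q)) x) ^ 2
      = ∑' n : ℕ, (∑ kl ∈ Finset.HasAntidiagonal.antidiagonal n, c1 (Real.log q) kl.1 * c1 (Real.log q) kl.2)
          * Real.exp (-(n:ℝ) * Real.log q * x) := by
    rw [sq]
    unfold G
    rw [tsum_mul_tsum_eq_tsum_sum_antidiagonal_of_summable_norm hs1n hs1n]
    apply tsum_congr
    intro n
    rw [Finset.sum_mul]
    apply Finset.sum_congr rfl
    intro kl hkl
    have hkl' : kl.1 + kl.2 = n := Finset.HasAntidiagonal.mem_antidiagonal.1 hkl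
    have hin : (kl.1 : ℝ) + (kl.2 : ℝ) = (n : ℝ) := by exact_mod_cast hkl'
    have hee : Real.exp (-(kl.1:ℝ) * Real.log q * x) * Real.exp (-(kl.2:ℝ) * Real.log q * x)
        = Real.exp (-(n:ℝ) * Real.log q * x) := by
      rw [← Real.exp_add]
      congr 1
      rw [← hin]
      ring
    calc c1 (Real.log q) kl.1 * Real.exp (-(kl.1:ℝ) * Real.log q * x)
          * (c1 (Real.log q) kl.2 * Real.exp (-(kl.2:ℝ) * Real.log q * x))
        = c1 (Real.log q) kl.1 * c1 (Real.log q) kl.2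
          * (Real.exp (-(kl.1:ℝ) * Real.log q * x) * Real.exp (-(kl.2:ℝ) * Real.log q * x)) := by
          ring
      _ = c1 (Real.log q) kl.1 * c1 (Real.log q) kl.2 * Real.exp (-(n:ℝ) * Real.log q * x) := by
          rw [hee]
  rw [hsq]
  unfold G CC
  rw [← Summable.tsum_add ((pb_Csq hL).summable hL hx0) ((pb_c2 hL).summable hL hx0)]
  apply tsum_congr
  intro n
  ring

end CMQD

/-- For `q > 1`, the function `x ↦ (ψ_q′(x))² + ψ_q″(x)` is completely monotonic
on `(0, ∞)`: it has derivatives of all orders there and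
`(−1)ⁿ f⁽ⁿ⁾(x) ≥ 0` for all `x > 0` and `n ≥ 0`. -/
theorem completely_monotonic_q_gt_one (q : ℝ) (hq : 1 < q) :
    ContDiffOn ℝ (⊤ : ℕ∞)
      (fun x => (deriv (qDigammaGt q) x) ^ 2 + deriv (deriv (qDigammaGt q)) x)
      (Set.Ioi 0) ∧
    ∀ n : ℕ, ∀ x ∈ Set.Ioi (0 : ℝ),
      0 ≤ (-1 : ℝ) ^ n *
        iteratedDerivWithin n
          (fun x => (deriv (qDigammaGt q) x) ^ 2 + deriv (deriv (qDigammaGt q)) x)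
          (Set.Ioi 0) x := by
  have hL : 0 < Real.log q := Real.log_pos hq
  constructor
  · exact (CMQD.contDiffOn_G (CMQD.pb_CC hL) hL).congr (CMQD.F_eq hq)
  · intro n x hx
    rw [iteratedDerivWithin_congr (CMQD.F_eq hq) hx,
      CMQD.iter_eq (CMQD.pb_CC hL) hL n hx]
    exact CMQD.sign_iter (CMQD.CC_nonneg hL) hL n x
end

section
/- Let 0 < q < 1. The function x ↦ (ψ_q'(x) − ln q)² + ψ_q''(x) is completely monotonic on the interval (0, ∞). -/
open Real Set Filter Topology

open Finset
open scoped ENNReal NNReal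
set_option linter.unusedSectionVars false
set_option linter.deprecated false

/-- The q-digamma function for `0 < q < 1`:
`ψ_q(x) = −ln(1−q) + (ln q)·∑_{k=1}^∞ q^{kx}/(1 − q^k)`. -/
noncomputable def qDigammaLt (q x : ℝ) : ℝ :=
  -Real.log (1 - q) +
    Real.log q * ∑' k : ℕ, q ^ (((k : ℝ) + 1) * x) / (1 - q ^ (k + 1))

namespace QDigAux

lemma key1 {a : ℝ} (ha : 0 ≤ a) : (1 - Real.exp (-a)) * (a + 2) ≤ 2 * a := by
  -- first show 2 - a ≤ (2 + a) * exp (-a)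
  have hF : ∀ x : ℝ, HasDerivAt (fun b : ℝ => (2 + b) * Real.exp (-b) + b)
      (1 - (1 + x) * Real.exp (-x)) x := by
    intro x
    have h1 : HasDerivAt (fun b : ℝ => -b) (-1) x := (hasDerivAt_id x).neg
    have h2 := h1.exp
    have h3 : HasDerivAt (fun b : ℝ => 2 + b) 1 x := (hasDerivAt_id x).const_add 2
    have h4 := (h3.mul h2).add (hasDerivAt_id x)
    refine h4.congr_deriv ?_
    ring
  have hmono : MonotoneOn (fun b : ℝ => (2 + b) * Real.exp (-b) + b) (Set.Ici 0) := by
    apply monotoneOn_of_deriv_nonneg (convex_Ici 0)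
    · exact Continuous.continuousOn (by fun_prop)
    · exact fun x hx => (hF x).differentiableAt.differentiableWithinAt
    · intro x _
      rw [(hF x).deriv]
      have h5 : (x + 1) * Real.exp (-x) ≤ Real.exp x * Real.exp (-x) :=
        mul_le_mul_of_nonneg_right (Real.add_one_le_exp x) (Real.exp_pos _).le
      rw [← Real.exp_add] at h5
      simp at h5
      linarith
  have h0 : ((2:ℝ) + 0) * Real.exp (-0) + 0 ≤ (2 + a) * Real.exp (-a) + a :=
    hmono (Set.self_mem_Ici) ha ha
  simp at h0
  nlinarith [Real.exp_pos (-a)]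

lemma key2 {a b : ℝ} (ha : 0 < a) (hb : 0 < b) :
    (a + b) * ((1 - Real.exp (-a)) * (1 - Real.exp (-b))) ≤
      (a * b) * (1 - Real.exp (-(a + b))) := by
  set u : ℝ := 1 - Real.exp (-a) with hu
  set v : ℝ := 1 - Real.exp (-b) with hv
  have hu0 : 0 < u := by
    have : Real.exp (-a) < 1 := Real.exp_lt_one_iff.2 (by linarith)
    simp [hu]; linarith
  have hv0 : 0 < v := by
    have : Real.exp (-b) < 1 := Real.exp_lt_one_iff.2 (by linarith)
    simp [hv]; linarith
  have hid : 1 - Real.exp (-(a + b)) = u + v - u * v := by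
    have : Real.exp (-(a+b)) = Real.exp (-a) * Real.exp (-b) := by
      rw [← Real.exp_add]; ring_nf
    rw [this, hu, hv]; ring
  rw [hid]
  have h1 : u * (a + 2) ≤ 2 * a := key1 ha.le
  have h2 : v * (b + 2) ≤ 2 * b := key1 hb.le
  nlinarith [mul_nonneg (mul_nonneg ha.le hu0.le) (by linarith : (0:ℝ) ≤ 2 * b - v * (b + 2)),
    mul_nonneg (mul_nonneg hb.le hv0.le) (by linarith : (0:ℝ) ≤ 2 * a - u * (a + 2))]

/-- geometric series with polynomial weight -/
lemma summable_poly_geom (p : ℕ) {r : ℝ} (h0 : 0 < r) (h1 : r < 1) :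
    Summable fun k : ℕ => ((k : ℝ) + 1) ^ p * r ^ k := by
  have hs : Summable fun k : ℕ => (k : ℝ) ^ p * r ^ k := by
    have := summable_pow_mul_geometric_of_norm_lt_one (R := ℝ) p
      (r := r) (by rw [Real.norm_eq_abs, abs_of_pos h0]; exact h1)
    simpa [mul_comm] using this
  have hs1 : Summable fun k : ℕ => ((k + 1 : ℕ) : ℝ) ^ p * r ^ (k + 1) :=
    (summable_nat_add_iff 1).2 hs
  have hs2 : Summable fun k : ℕ => r⁻¹ * (((k + 1 : ℕ) : ℝ) ^ p * r ^ (k + 1)) :=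
    hs1.mul_left _
  refine hs2.congr fun k => ?_
  push_cast
  field_simp
  ring

/-- step: multiplying coefficients by `m n` keeps summability -/
lemma summable_mul_m {c m : ℕ → ℝ} (hm : ∀ n, 0 ≤ m n)
    (hsum : ∀ δ : ℝ, 0 < δ → Summable fun n => |c n| * Real.exp (-m n * δ))
    {δ : ℝ} (hδ : 0 < δ) :
    Summable fun n => (m n * |c n|) * Real.exp (-m n * δ) := by
  have h2 := (hsum (δ / 2) (by positivity)).mul_left (2 / δ)
  refine Summable.of_nonneg_of_le (fun n => by have := hm n; positivity) (fun n => ?_) h2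
  have e1 : Real.exp (-m n * δ) = Real.exp (-m n * (δ / 2)) * Real.exp (-m n * (δ / 2)) := by
    rw [← Real.exp_add]; ring_nf
  have e2 : m n * Real.exp (-m n * (δ / 2)) ≤ 2 / δ := by
    have h3 : m n * (δ / 2) + 1 ≤ Real.exp (m n * (δ / 2)) := Real.add_one_le_exp _
    have h4 : Real.exp (-m n * (δ / 2)) = (Real.exp (m n * (δ / 2)))⁻¹ := by
      rw [← Real.exp_neg]; ring_nf
    rw [h4]
    rw [mul_inv_le_iff₀ (Real.exp_pos _)]
    have : 0 < m n * (δ/2) + 1 := by nlinarith [hm n]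
    calc m n = (2/δ) * (m n * (δ/2)) := by field_simp
    _ ≤ (2/δ) * Real.exp (m n * (δ/2)) := by
        apply mul_le_mul_of_nonneg_left _ (by positivity)
        linarith
  calc (m n * |c n|) * Real.exp (-m n * δ)
      = (m n * Real.exp (-m n * (δ/2))) * (|c n| * Real.exp (-m n * (δ/2))) := by
        rw [e1]; ring
    _ ≤ (2/δ) * (|c n| * Real.exp (-m n * (δ/2))) := by
        apply mul_le_mul_of_nonneg_right e2 (by positivity)

/-- Core: term-wise differentiation of exponential series -/
lemma hasDerivAt_tsum_exp {c m : ℕ → ℝ} (hm : ∀ n, 0 ≤ m n)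
    (hsum : ∀ δ : ℝ, 0 < δ → Summable fun n => |c n| * Real.exp (-m n * δ))
    {x : ℝ} (hx : 0 < x) :
    HasDerivAt (fun y => ∑' n, c n * Real.exp (-m n * y))
      (∑' n, (-m n * c n) * Real.exp (-m n * x)) x := by
  set δ := x / 2 with hδdef
  have hδ : 0 < δ := by positivity
  have hsum' := summable_mul_m hm hsum hδ
  apply hasDerivAt_of_tendstoUniformlyOn (l := (atTop : Filter (Finset ℕ))) (isOpen_Ioi (a := δ))
    (f := fun (t : Finset ℕ) y => ∑ n ∈ t, c n * Real.exp (-m n * y))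
    (f' := fun (t : Finset ℕ) y => ∑ n ∈ t, (-m n * c n) * Real.exp (-m n * y))
    (g := fun y => ∑' n, c n * Real.exp (-m n * y))
    (g' := fun y => ∑' n, (-m n * c n) * Real.exp (-m n * y))
  · apply tendstoUniformlyOn_tsum hsum'
    intro n y hy
    rw [Real.norm_eq_abs, abs_mul, abs_mul, abs_neg, abs_of_nonneg (hm n),
      Real.abs_exp]
    apply mul_le_mul_of_nonneg_left _ (by have := hm n; positivity)
    apply Real.exp_le_exp.2
    have := hm n
    have hy' : δ ≤ y := (le_of_lt hy)
    nlinarith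
  · filter_upwards with t y hy
    apply HasDerivAt.fun_sum
    intro n _
    have h1 : HasDerivAt (fun y : ℝ => -m n * y) (-m n) y := by
      simpa using (hasDerivAt_id y).const_mul (-m n)
    have h2 := (h1.exp).const_mul (c n)
    refine h2.congr_deriv ?_
    ring
  · intro y hy
    have hy0 : 0 < y := lt_trans hδ hy
    have hS : Summable fun n => c n * Real.exp (-m n * y) := by
      apply Summable.of_norm
      refine (hsum y hy0).congr fun n => ?_
      rw [Real.norm_eq_abs, abs_mul, Real.abs_exp]
    exact hS.hasSum
  · show x ∈ Ioi δ
    simp [hδdef]; linarith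


lemma summable_pow_m {c m : ℕ → ℝ} (hm : ∀ n, 0 ≤ m n) (hc : ∀ n, 0 ≤ c n)
    (hsum : ∀ δ : ℝ, 0 < δ → Summable fun n => c n * Real.exp (-m n * δ)) :
    ∀ (N : ℕ) (δ : ℝ), 0 < δ → Summable fun n => (c n * m n ^ N) * Real.exp (-m n * δ) := by
  intro N
  induction N with
  | zero => intro δ hδ; simpa using hsum δ hδ
  | succ N ih =>
    intro δ hδ
    have habs : ∀ δ : ℝ, 0 < δ →
        Summable fun n => |c n * m n ^ N| * Real.exp (-m n * δ) := by
      intro δ' hδ'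
      refine (ih δ' hδ').congr fun n => ?_
      rw [abs_of_nonneg (by have := hm n; have := hc n; positivity)]
    have h := summable_mul_m (c := fun n => c n * m n ^ N) hm habs hδ
    refine h.congr fun n => ?_
    rw [abs_of_nonneg (by have := hm n; have := hc n; positivity)]
    ring

lemma iteratedDerivWithin_tsum_exp {c m : ℕ → ℝ} (hm : ∀ n, 0 ≤ m n) (hc : ∀ n, 0 ≤ c n)
    (hsum : ∀ δ : ℝ, 0 < δ → Summable fun n => c n * Real.exp (-m n * δ)) (N : ℕ) :
    ∀ x ∈ Ioi (0:ℝ),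
      iteratedDerivWithin N (fun y => ∑' n, c n * Real.exp (-m n * y)) (Ioi 0) x
        = (-1)^N * ∑' n, (c n * m n ^ N) * Real.exp (-m n * x) := by
  induction N with
  | zero => intro x hx; simp
  | succ N ih =>
    intro x hx
    have hx0 : (0:ℝ) < x := hx
    rw [iteratedDerivWithin_succ]
    rw [derivWithin_congr (fun y hy => ih y hy) (ih x hx)]
    have habs : ∀ δ : ℝ, 0 < δ →
        Summable fun n => |c n * m n ^ N| * Real.exp (-m n * δ) := by
      intro δ' hδ'
      refine (summable_pow_m hm hc hsum N δ' hδ').congr fun n => ?_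
      rw [abs_of_nonneg (by have := hm n; have := hc n; positivity)]
    have hd := (hasDerivAt_tsum_exp (c := fun n => c n * m n ^ N) hm habs hx0).const_mul
      ((-1:ℝ)^N)
    have heq : (fun n => (-m n * (c n * m n ^ N)) * Real.exp (-m n * x))
        = fun n => -((c n * m n ^ (N+1)) * Real.exp (-m n * x)) := by
      funext n; ring
    rw [heq, tsum_neg] at hd
    have hval : (-1:ℝ)^N * -(∑' n, (c n * m n ^ (N+1)) * Real.exp (-m n * x))
        = (-1)^(N+1) * ∑' n, (c n * m n ^ (N+1)) * Real.exp (-m n * x) := by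
      ring
    rw [hval] at hd
    exact hd.hasDerivWithinAt.derivWithin ((uniqueDiffOn_Ioi (0:ℝ)) x hx)

noncomputable def sQ (q : ℝ) : ℝ := -Real.log q
noncomputable def aQ (q : ℝ) (k : ℕ) : ℝ := (1 - q ^ k)⁻¹
noncomputable def m0 (q : ℝ) (k : ℕ) : ℝ := ((k:ℝ)+1) * sQ q
noncomputable def c0 (q : ℝ) (k : ℕ) : ℝ := aQ q (k+1)
noncomputable def p1 (q : ℝ) (k : ℕ) : ℝ := (Real.log q)^2 * ((k:ℝ)+1) * aQ q (k+1)
noncomputable def p2 (q : ℝ) (k : ℕ) : ℝ := (Real.log q)^3 * ((k:ℝ)+1)^2 * aQ q (k+1)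
noncomputable def eC (q : ℝ) (k : ℕ) : ℝ :=
  (Real.log q)^3 * ((k:ℝ)+1) * ((k:ℝ)-1) * aQ q (k+1)
noncomputable def dC (q : ℝ) (t : ℕ) : ℝ :=
  ∑ kl ∈ Finset.HasAntidiagonal.antidiagonal t, p1 q kl.1 * p1 q kl.2
noncomputable def cC (q : ℝ) : ℕ → ℝ
  | 0 => (Real.log q)^2
  | 1 => eC q 0
  | (t+2) => dC q t + eC q (t+1)

section qfacts
variable {q : ℝ} (hq0 : 0 < q) (hq1 : q < 1)

lemma hlog2 : (Real.log q)^2 = (sQ q)^2 := by unfold sQ; ring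

include hq0 hq1

lemma hsQ : 0 < sQ q := by
  have := Real.log_neg hq0 hq1
  simp [sQ]; linarith

lemma hqexp (k : ℕ) : q ^ (k+1) = Real.exp (-(m0 q k)) := by
  have h1 : Real.exp (((k:ℝ)+1) * Real.log q) = Real.exp (Real.log q) ^ (k+1) := by
    rw [← Real.exp_nat_mul]
    push_cast
    ring_nf
  rw [Real.exp_log hq0] at h1
  rw [← h1]
  congr 1
  simp [m0, sQ]

lemma hpow1 (k : ℕ) : 0 < 1 - q ^ (k+1) := by
  have : q ^ (k+1) < 1 := pow_lt_one₀ hq0.le hq1 (Nat.succ_ne_zero k)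
  linarith

lemma haQpos (k : ℕ) : 0 < aQ q (k+1) := by
  rw [aQ]
  exact inv_pos.2 (hpow1 hq0 hq1 k)

lemma haQle (k : ℕ) : aQ q (k+1) ≤ (1 - q)⁻¹ := by
  rw [aQ]
  apply inv_anti₀ (by linarith)
  calc 1 - q^(k+1) ≥ 1 - q^1 := by
        have : q^(k+1) ≤ q^1 := pow_le_pow_of_le_one hq0.le hq1.le (by omega)
        linarith
  _ = 1 - q := by norm_num

/-- summability workhorse -/
lemma summable_abs_poly (p : ℕ) (K : ℝ) {c : ℕ → ℝ}
    (hb : ∀ k, |c k| ≤ K * ((k:ℝ)+1)^p) {x : ℝ} (hx : 0 < x) :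
    Summable fun k => |c k| * Real.exp (-(m0 q k) * x) := by
  set r : ℝ := Real.exp (-(sQ q * x)) with hr
  have hr0 : 0 < r := Real.exp_pos _
  have hr1 : r < 1 := by
    rw [hr]
    apply Real.exp_lt_one_iff.2
    have := hsQ hq0 hq1
    nlinarith
  have hK : 0 ≤ K := by
    have h := hb 0
    simp at h
    linarith [abs_nonneg (c 0)]
  have hgeo := (summable_poly_geom p hr0 hr1).mul_left (K * r)
  refine Summable.of_nonneg_of_le (fun k => by positivity) (fun k => ?_) hgeo
  have hexp : Real.exp (-(m0 q k) * x) = r ^ (k+1) := by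
    rw [hr, ← Real.exp_nat_mul]
    congr 1
    simp [m0]
    ring
  rw [hexp, pow_succ]
  calc |c k| * (r ^ k * r) ≤ (K * ((k:ℝ)+1)^p) * (r ^ k * r) := by
        apply mul_le_mul_of_nonneg_right (hb k) (by positivity)
  _ = K * r * (((k:ℝ)+1)^p * r^k) := by ring

lemma qdig_eq : qDigammaLt q = fun x => -Real.log (1 - q) +
    Real.log q * ∑' k : ℕ, c0 q k * Real.exp (-(m0 q k) * x) := by
  funext x
  unfold qDigammaLt
  congr 1
  congr 1
  apply tsum_congr
  intro k
  rw [Real.rpow_def_of_pos hq0, div_eq_mul_inv, mul_comm]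
  unfold c0 aQ
  congr 1
  unfold m0 sQ
  ring

lemma habs_c0 {x : ℝ} (hx : 0 < x) :
    Summable fun k => |c0 q k| * Real.exp (-(m0 q k) * x) := by
  apply summable_abs_poly hq0 hq1 0 ((1-q)⁻¹)
  · intro k
    unfold c0
    rw [abs_of_nonneg (haQpos hq0 hq1 k).le]
    simpa using haQle hq0 hq1 k
  · exact hx

lemma habs_p1 {x : ℝ} (hx : 0 < x) :
    Summable fun k => |p1 q k| * Real.exp (-(m0 q k) * x) := by
  apply summable_abs_poly hq0 hq1 1 ((Real.log q)^2 * (1-q)⁻¹)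
  · intro k
    unfold p1
    rw [abs_mul, abs_mul, abs_of_nonneg (haQpos hq0 hq1 k).le, abs_of_nonneg (sq_nonneg _),
      abs_of_nonneg (by positivity : (0:ℝ) ≤ (k:ℝ)+1)]
    calc (Real.log q)^2 * ((k:ℝ)+1) * aQ q (k+1)
        ≤ (Real.log q)^2 * ((k:ℝ)+1) * (1-q)⁻¹ :=
          mul_le_mul_of_nonneg_left (haQle hq0 hq1 k) (by positivity)
      _ = (Real.log q)^2 * (1-q)⁻¹ * ((k:ℝ)+1)^1 := by ring
  · exact hx

lemma habs_p2 {x : ℝ} (hx : 0 < x) :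
    Summable fun k => |p2 q k| * Real.exp (-(m0 q k) * x) := by
  apply summable_abs_poly hq0 hq1 2 (|Real.log q|^3 * (1-q)⁻¹)
  · intro k
    unfold p2
    have e : |(Real.log q)^3 * ((k:ℝ)+1)^2 * aQ q (k+1)|
        = |Real.log q|^3 * ((k:ℝ)+1)^2 * aQ q (k+1) := by
      rw [abs_mul, abs_mul, abs_pow, abs_of_nonneg (haQpos hq0 hq1 k).le,
        abs_of_nonneg (by positivity : (0:ℝ) ≤ ((k:ℝ)+1)^2)]
    rw [e]
    calc |Real.log q|^3 * ((k:ℝ)+1)^2 * aQ q (k+1)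
        ≤ |Real.log q|^3 * ((k:ℝ)+1)^2 * (1-q)⁻¹ :=
          mul_le_mul_of_nonneg_left (haQle hq0 hq1 k) (by positivity)
      _ = |Real.log q|^3 * (1-q)⁻¹ * ((k:ℝ)+1)^2 := by ring
  · exact hx

lemma hm0_nonneg (k : ℕ) : 0 ≤ m0 q k := by
  have := hsQ hq0 hq1
  unfold m0; positivity

lemma hasDerivAt_qdig {x : ℝ} (hx : 0 < x) :
    HasDerivAt (qDigammaLt q) (∑' k, p1 q k * Real.exp (-(m0 q k) * x)) x := by
  rw [qdig_eq hq0 hq1]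
  have hd := hasDerivAt_tsum_exp (c := c0 q) (m := m0 q) (hm0_nonneg hq0 hq1)
    (fun δ hδ => habs_c0 hq0 hq1 hδ) hx
  have h2 := (hd.const_mul (Real.log q)).const_add (-Real.log (1 - q))
  refine h2.congr_deriv ?_
  rw [← tsum_mul_left]
  apply tsum_congr
  intro k
  unfold p1 c0 m0 sQ
  ring

lemma deriv_qdig {x : ℝ} (hx : 0 < x) :
    deriv (qDigammaLt q) x = ∑' k, p1 q k * Real.exp (-(m0 q k) * x) :=
  (hasDerivAt_qdig hq0 hq1 hx).deriv

lemma hasDerivAt_psi1 {x : ℝ} (hx : 0 < x) :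
    HasDerivAt (fun y => ∑' k, p1 q k * Real.exp (-(m0 q k) * y))
      (∑' k, p2 q k * Real.exp (-(m0 q k) * x)) x := by
  have hd := hasDerivAt_tsum_exp (c := p1 q) (m := m0 q) (hm0_nonneg hq0 hq1)
    (fun δ hδ => habs_p1 hq0 hq1 hδ) hx
  convert hd using 1
  apply tsum_congr
  intro k
  unfold p1 p2 m0 sQ
  ring

lemma deriv2_qdig {x : ℝ} (hx : 0 < x) :
    deriv (deriv (qDigammaLt q)) x = ∑' k, p2 q k * Real.exp (-(m0 q k) * x) := by
  have hEv : deriv (qDigammaLt q) =ᶠ[𝓝 x]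
      (fun y => ∑' k, p1 q k * Real.exp (-(m0 q k) * y)) := by
    filter_upwards [isOpen_Ioi.mem_nhds (show x ∈ Ioi (0:ℝ) from hx)] with y hy
    exact deriv_qdig hq0 hq1 hy
  rw [hEv.deriv_eq]
  exact (hasDerivAt_psi1 hq0 hq1 hx).deriv

lemma perterm (j k : ℕ) :
    sQ q ^ 3 * ((j:ℝ)+(k:ℝ)+2) * aQ q (j+k+2) ≤ p1 q j * p1 q k := by
  have hs := hsQ hq0 hq1
  set s := sQ q with hsdef
  have haj : (0:ℝ) < ((j:ℝ)+1)*s := by positivity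
  have hak : (0:ℝ) < ((k:ℝ)+1)*s := by positivity
  have hkey := key2 haj hak
  have hej : Real.exp (-(((j:ℝ)+1)*s)) = q ^ (j+1) := by
    rw [hqexp hq0 hq1 j]; rfl
  have hek : Real.exp (-(((k:ℝ)+1)*s)) = q ^ (k+1) := by
    rw [hqexp hq0 hq1 k]; rfl
  have hejk : Real.exp (-(((j:ℝ)+1)*s + ((k:ℝ)+1)*s)) = q ^ (j+k+2) := by
    have := hqexp hq0 hq1 (j+k+1)
    rw [show j+k+1+1 = j+k+2 from rfl] at this
    rw [this]
    congr 1
    unfold m0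
    push_cast
    ring
  rw [hej, hek, hejk] at hkey
  set P : ℝ := 1 - q^(j+1) with hP
  set Q : ℝ := 1 - q^(k+1) with hQ
  set R : ℝ := 1 - q^(j+k+2) with hR
  have hP0 : 0 < P := hpow1 hq0 hq1 j
  have hQ0 : 0 < Q := hpow1 hq0 hq1 k
  have hR0 : 0 < R := by
    rw [hR, show j+k+2 = (j+k+1)+1 from rfl]
    exact hpow1 hq0 hq1 (j+k+1)
  have e1 : s^3*((j:ℝ)+(k:ℝ)+2) * aQ q (j+k+2) = s^3 * ((j:ℝ)+(k:ℝ)+2) / R := by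
    unfold aQ
    rw [div_eq_mul_inv]
  have e2 : p1 q j * p1 q k = (s^2*((j:ℝ)+1)) * (s^2*((k:ℝ)+1)) / (P*Q) := by
    unfold p1 aQ
    rw [hlog2, ← hsdef]
    field_simp
    try ring
    have hX : (1 - q*q^j - q*q^k + q^2*q^j*q^k) = P*Q := by rw [hP, hQ]; ring
    rw [hX, mul_inv_cancel₀ (mul_pos hP0 hQ0).ne']
  rw [e1, e2, div_le_div_iff₀ hR0 (by positivity)]
  have h2 := mul_le_mul_of_nonneg_left hkey (sq_nonneg s)
  nlinarith [h2]

lemma cC_nonneg (n : ℕ) : 0 ≤ cC q n := by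
  have hs := hsQ hq0 hq1
  have hL : Real.log q < 0 := Real.log_neg hq0 hq1
  have hL3 : Real.log q ^ 3 ≤ 0 := by nlinarith [sq_nonneg (Real.log q)]
  match n with
  | 0 => show (0:ℝ) ≤ (Real.log q)^2; positivity
  | 1 =>
    show (0:ℝ) ≤ eC q 0
    unfold eC
    have h9 := haQpos hq0 hq1 0
    have h10 : (0:ℝ) ≤ aQ q (0+1) * -(Real.log q ^ 3) :=
      mul_nonneg h9.le (by linarith)
    push_cast
    nlinarith [h10]
  | (t+2) =>
    show (0:ℝ) ≤ dC q t + eC q (t+1)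
    have hcard := Finset.card_nsmul_le_sum (Finset.HasAntidiagonal.antidiagonal t)
      (fun kl => p1 q kl.1 * p1 q kl.2) (sQ q^3*((t:ℝ)+2)*aQ q (t+2)) ?_
    · rw [Finset.Nat.card_antidiagonal, nsmul_eq_mul] at hcard
      have e5 : eC q (t+1) = -(sQ q^3 * (t:ℝ) * ((t:ℝ)+2) * aQ q (t+2)) := by
        unfold eC sQ
        push_cast
        ring
      have hA := haQpos hq0 hq1 (t+1)
      have hd : ((t:ℝ)+1) * (sQ q^3*((t:ℝ)+2)*aQ q (t+2)) ≤ dC q t := by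
        unfold dC; push_cast at hcard; linarith
      have haux : (0:ℝ) ≤ sQ q^3 * ((t:ℝ)+2) * aQ q (t+2) := by
        have : aQ q (t+2) = aQ q ((t+1)+1) := rfl
        rw [this]; positivity
      rw [e5]
      nlinarith
    · intro kl hkl
      have ht : kl.1 + kl.2 = t := Finset.HasAntidiagonal.mem_antidiagonal.1 hkl
      have hpt := perterm hq0 hq1 kl.1 kl.2
      rw [ht] at hpt
      have hc : ((kl.1:ℝ)+(kl.2:ℝ)+2) = ((t:ℝ)+2) := by
        rw [← ht]; push_cast; ring
      rw [hc] at hpt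
      exact hpt

lemma antidiag_sum (t : ℕ) (x : ℝ) :
    ∑ kl ∈ Finset.HasAntidiagonal.antidiagonal t,
        (p1 q kl.1 * Real.exp (-(m0 q kl.1) * x)) * (p1 q kl.2 * Real.exp (-(m0 q kl.2) * x))
      = dC q t * Real.exp (-(m0 q (t+1)) * x) := by
  unfold dC
  rw [Finset.sum_mul]
  apply Finset.sum_congr rfl
  intro kl hkl
  have ht : kl.1 + kl.2 = t := Finset.HasAntidiagonal.mem_antidiagonal.1 hkl
  have hexp : Real.exp (-(m0 q kl.1) * x) * Real.exp (-(m0 q kl.2) * x)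
      = Real.exp (-(m0 q (t+1)) * x) := by
    rw [← Real.exp_add]
    congr 1
    unfold m0
    rw [← ht]
    push_cast
    ring
  rw [mul_mul_mul_comm, hexp]

lemma Sof {c : ℕ → ℝ} {x : ℝ}
    (h : Summable fun k => |c k| * Real.exp (-(m0 q k) * x)) :
    Summable fun k => c k * Real.exp (-(m0 q k) * x) := by
  apply Summable.of_norm
  refine h.congr fun k => ?_
  rw [Real.norm_eq_abs, abs_mul, Real.abs_exp]

lemma habs_eC {x : ℝ} (hx : 0 < x) :
    Summable fun k => |eC q k| * Real.exp (-(m0 q k) * x) := by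
  apply summable_abs_poly hq0 hq1 2 (|Real.log q|^3 * (1-q)⁻¹)
  · intro k
    unfold eC
    have hb : |(k:ℝ)-1| ≤ (k:ℝ)+1 := by
      rw [abs_le]
      constructor <;> [skip; linarith [Nat.cast_nonneg (α := ℝ) k]]
      linarith [Nat.cast_nonneg (α := ℝ) k]
    have e : |(Real.log q)^3 * ((k:ℝ)+1) * ((k:ℝ)-1) * aQ q (k+1)|
        = |Real.log q|^3 * ((k:ℝ)+1) * |(k:ℝ)-1| * aQ q (k+1) := by
      rw [abs_mul, abs_mul, abs_mul, abs_pow, abs_of_nonneg (haQpos hq0 hq1 k).le,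
        abs_of_nonneg (by positivity : (0:ℝ) ≤ (k:ℝ)+1)]
    rw [e]
    have h1 := haQle hq0 hq1 k
    have h2 := (haQpos hq0 hq1 k).le
    have h3 : (0:ℝ) < (1-q)⁻¹ := by
      have : (0:ℝ) < 1 - q := by linarith
      positivity
    calc |Real.log q|^3 * ((k:ℝ)+1) * |(k:ℝ)-1| * aQ q (k+1)
        ≤ |Real.log q|^3 * ((k:ℝ)+1) * ((k:ℝ)+1) * (1-q)⁻¹ := by
          apply mul_le_mul
          · apply mul_le_mul_of_nonneg_left hb (by positivity)
          · exact h1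
          · exact h2
          · positivity
      _ = |Real.log q|^3 * (1-q)⁻¹ * ((k:ℝ)+1)^2 := by ring
  · exact hx

lemma summable_dC {x : ℝ} (hx : 0 < x) :
    Summable fun t => dC q t * Real.exp (-(m0 q (t+1)) * x) := by
  have hn : Summable fun k => ‖p1 q k * Real.exp (-(m0 q k) * x)‖ := by
    refine (habs_p1 hq0 hq1 hx).congr fun k => ?_
    rw [Real.norm_eq_abs, abs_mul, Real.abs_exp]
  have h := summable_norm_sum_mul_antidiagonal_of_summable_norm hn hn
  apply Summable.of_norm
  refine h.congr fun t => ?_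
  rw [antidiag_sum hq0 hq1 t x]

lemma summable_cC {x : ℝ} (hx : 0 < x) :
    Summable fun n => cC q n * Real.exp (-((n:ℝ) * sQ q) * x) := by
  rw [← summable_nat_add_iff 2]
  have h1 := summable_dC hq0 hq1 hx
  have h2 : Summable fun t => eC q (t+1) * Real.exp (-(m0 q (t+1)) * x) := by
    have := Sof hq0 hq1 (habs_eC hq0 hq1 hx)
    exact (summable_nat_add_iff 1).2 this
  refine (h1.add h2).congr fun t => ?_
  show dC q t * Real.exp (-(m0 q (t+1)) * x) + eC q (t+1) * Real.exp (-(m0 q (t+1)) * x)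
      = cC q (t+2) * Real.exp (-(((t+2:ℕ):ℝ) * sQ q) * x)
  have he : Real.exp (-(m0 q (t+1)) * x) = Real.exp (-(((t+2:ℕ):ℝ) * sQ q) * x) := by
    congr 1
    unfold m0
    push_cast
    ring
  rw [he]
  show _ = (dC q t + eC q (t+1)) * _
  ring

set_option maxHeartbeats 1000000 in
lemma main_eq {x : ℝ} (hx : 0 < x) :
    (deriv (qDigammaLt q) x - Real.log q)^2 + deriv (deriv (qDigammaLt q)) x
      = ∑' n, cC q n * Real.exp (-((n:ℝ) * sQ q) * x) := by
  rw [deriv_qdig hq0 hq1 hx, deriv2_qdig hq0 hq1 hx]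
  set L := Real.log q with hLdef
  set T1 := ∑' k, p1 q k * Real.exp (-(m0 q k) * x) with hT1
  set T2 := ∑' k, p2 q k * Real.exp (-(m0 q k) * x) with hT2
  have Sp1 := Sof hq0 hq1 (habs_p1 hq0 hq1 hx)
  have Sp2 := Sof hq0 hq1 (habs_p2 hq0 hq1 hx)
  have SeC := Sof hq0 hq1 (habs_eC hq0 hq1 hx)
  have SdC := summable_dC hq0 hq1 hx
  have ScC := summable_cC hq0 hq1 hx
  have hn : Summable fun k => ‖p1 q k * Real.exp (-(m0 q k) * x)‖ := by
    refine (habs_p1 hq0 hq1 hx).congr fun k => ?_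
    rw [Real.norm_eq_abs, abs_mul, Real.abs_exp]
  have hT1sq : T1^2 = ∑' t, dC q t * Real.exp (-(m0 q (t+1)) * x) := by
    rw [hT1, sq, tsum_mul_tsum_eq_tsum_sum_antidiagonal_of_summable_norm hn hn]
    exact tsum_congr fun t => antidiag_sum hq0 hq1 t x
  have hEser : ∑' k, eC q k * Real.exp (-(m0 q k) * x) = -2*L*T1 + T2 := by
    have h1 : ∀ (k : ℕ), eC q k * Real.exp (-(m0 q k) * x)
        = (-2*L) * (p1 q k * Real.exp (-(m0 q k) * x)) + p2 q k * Real.exp (-(m0 q k) * x) := by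
      intro k
      unfold eC p1 p2
      ring
    rw [tsum_congr h1, Summable.tsum_add (Sp1.mul_left _) Sp2, tsum_mul_left]
  have hEsplit : ∑' k, eC q k * Real.exp (-(m0 q k) * x)
      = eC q 0 * Real.exp (-(m0 q 0) * x)
        + ∑' t, eC q (t+1) * Real.exp (-(m0 q (t+1)) * x) := Summable.tsum_eq_zero_add SeC
  have hR1 : ∑' n, cC q n * Real.exp (-((n:ℝ) * sQ q) * x)
      = L^2 + ∑' t, cC q (t+1) * Real.exp (-(((t+1:ℕ):ℝ) * sQ q) * x) := by
    rw [Summable.tsum_eq_zero_add ScC]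
    congr 1
    show cC q 0 * Real.exp (-(((0:ℕ):ℝ) * sQ q) * x) = L^2
    norm_num [cC]
    rfl
  have hS1 : Summable fun t => cC q (t+1) * Real.exp (-(((t+1:ℕ):ℝ) * sQ q) * x) :=
    (summable_nat_add_iff 1).2 ScC
  have hR2 : ∑' t, cC q (t+1) * Real.exp (-(((t+1:ℕ):ℝ) * sQ q) * x)
      = eC q 0 * Real.exp (-(m0 q 0) * x)
        + ∑' t, cC q (t+2) * Real.exp (-(((t+2:ℕ):ℝ) * sQ q) * x) := by
    rw [Summable.tsum_eq_zero_add hS1]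
    congr 1
    show cC q 1 * Real.exp (-(((1:ℕ):ℝ) * sQ q) * x) = eC q 0 * Real.exp (-(m0 q 0) * x)
    have he : Real.exp (-(((1:ℕ):ℝ) * sQ q) * x) = Real.exp (-(m0 q 0) * x) := by
      congr 1
      unfold m0
      push_cast
      ring
    rw [he]
    rfl
  have hR3 : ∑' t, cC q (t+2) * Real.exp (-(((t+2:ℕ):ℝ) * sQ q) * x)
      = (∑' t, dC q t * Real.exp (-(m0 q (t+1)) * x))
        + ∑' t, eC q (t+1) * Real.exp (-(m0 q (t+1)) * x) := by
    have h2 : ∀ (t : ℕ), cC q (t+2) * Real.exp (-(((t+2:ℕ):ℝ) * sQ q) * x)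
        = dC q t * Real.exp (-(m0 q (t+1)) * x) + eC q (t+1) * Real.exp (-(m0 q (t+1)) * x) := by
      intro t
      have he : Real.exp (-(((t+2:ℕ):ℝ) * sQ q) * x) = Real.exp (-(m0 q (t+1)) * x) := by
        congr 1
        unfold m0
        push_cast
        ring
      rw [he, show cC q (t+2) = dC q t + eC q (t+1) by simp [cC]]
      ring
    rw [tsum_congr h2]
    exact Summable.tsum_add SdC ((summable_nat_add_iff 1).2 SeC)
  have hsq : (T1 - L)^2 = T1^2 - 2*L*T1 + L^2 := by ring
  rw [hR1, hR2, hR3, hsq, hT1sq]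
  linarith [hEser, hEsplit]

lemma gq_eq_comp : (fun y => ∑' n, cC q n * Real.exp (-((n:ℝ) * sQ q) * y))
    = (FormalMultilinearSeries.ofScalars ℝ (cC q)).sum ∘ (fun y => Real.exp (Real.log q * y)) := by
  funext y
  show _ = (FormalMultilinearSeries.ofScalars ℝ (cC q)).sum (Real.exp (Real.log q * y))
  rw [FormalMultilinearSeries.sum]
  apply tsum_congr
  intro n
  rw [FormalMultilinearSeries.ofScalars_apply_eq, smul_eq_mul]
  congr 1
  rw [← Real.exp_nat_mul]
  congr 1
  unfold sQ
  ring

lemma radius_ge {ρ : ℝ} (h0 : 0 < ρ) (h1 : ρ < 1) :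
    (ρ.toNNReal : ℝ≥0∞) ≤ (FormalMultilinearSeries.ofScalars ℝ (cC q)).radius := by
  apply FormalMultilinearSeries.le_radius_of_summable
  have hδ : 0 < Real.log ρ / Real.log q :=
    div_pos_of_neg_of_neg (Real.log_neg h0 h1) (Real.log_neg hq0 hq1)
  have h := summable_cC hq0 hq1 hδ
  refine h.congr fun n => ?_
  rw [FormalMultilinearSeries.ofScalars_norm, Real.norm_eq_abs,
    abs_of_nonneg (cC_nonneg hq0 hq1 n), Real.coe_toNNReal _ h0.le]
  congr 1
  rw [← Real.exp_log h0, ← Real.exp_nat_mul]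
  congr 1
  have hlq : Real.log q ≠ 0 := (Real.log_neg hq0 hq1).ne
  unfold sQ
  field_simp
  ring
  rw [Real.log_exp]

lemma analyticG :
    AnalyticOnNhd ℝ (fun y => ∑' n, cC q n * Real.exp (-((n:ℝ) * sQ q) * y)) (Ioi 0) := by
  rw [gq_eq_comp hq0 hq1]
  intro x hx
  have hx0 : (0:ℝ) < x := hx
  set w : ℝ := Real.exp (Real.log q * x) with hw
  have hw0 : 0 < w := Real.exp_pos _
  have hw1 : w < 1 := by
    rw [hw]
    apply Real.exp_lt_one_iff.2
    nlinarith [Real.log_neg hq0 hq1]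
  set ρ : ℝ := (w+1)/2 with hρ
  have hρ0 : 0 < ρ := by rw [hρ]; linarith
  have hρ1 : ρ < 1 := by rw [hρ]; linarith
  have hwρ : w < ρ := by rw [hρ]; linarith
  have hrad := radius_ge hq0 hq1 hρ0 hρ1
  have hradpos : 0 < (FormalMultilinearSeries.ofScalars ℝ (cC q)).radius :=
    lt_of_lt_of_le (by simpa using (ENNReal.coe_pos.2 (Real.toNNReal_pos.2 hρ0))) hrad
  have hball := (FormalMultilinearSeries.ofScalars ℝ (cC q)).hasFPowerSeriesOnBall hradpos
  have hmem : w ∈ EMetric.ball (0:ℝ) (FormalMultilinearSeries.ofScalars ℝ (cC q)).radius := by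
    change edist w (0:ℝ) < _
    rw [edist_zero_right]
    refine lt_of_lt_of_le ?_ hrad
    change ((‖w‖₊ : ℝ≥0∞)) < _
    rw [ENNReal.coe_lt_coe]
    have hnn : ‖w‖₊ = Real.toNNReal w := by
      ext
      simp [Real.coe_toNNReal _ hw0.le, Real.norm_of_nonneg hw0.le]
    rw [hnn]
    exact (Real.toNNReal_lt_toNNReal_iff hρ0).2 hwρ
  have hw_an : AnalyticAt ℝ (fun y : ℝ => Real.exp (Real.log q * y)) x := by
    apply AnalyticAt.rexp
    exact (analyticAt_const).mul analyticAt_id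
  exact (hball.analyticAt_of_mem hmem).comp hw_an

end qfacts

end QDigAux

open QDigAux

/-- For `0 < q < 1`, the function `x ↦ (ψ_q′(x) − ln q)² + ψ_q″(x)` is completely
monotonic on `(0, ∞)`. -/
theorem completely_monotonic_q_lt_one (q : ℝ) (hq0 : 0 < q) (hq1 : q < 1) :
    ContDiffOn ℝ (⊤ : ℕ∞)
      (fun x => (deriv (qDigammaLt q) x - Real.log q) ^ 2 + deriv (deriv (qDigammaLt q)) x)
      (Set.Ioi 0) ∧
    ∀ n : ℕ, ∀ x ∈ Set.Ioi (0 : ℝ),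
      0 ≤ (-1 : ℝ) ^ n *
        iteratedDerivWithin n
          (fun x => (deriv (qDigammaLt q) x - Real.log q) ^ 2 + deriv (deriv (qDigammaLt q)) x)
          (Set.Ioi 0) x := by
  have hs := hsQ hq0 hq1
  have hEq : Set.EqOn
      (fun x => (deriv (qDigammaLt q) x - Real.log q) ^ 2 + deriv (deriv (qDigammaLt q)) x)
      (fun y => ∑' n, cC q n * Real.exp (-((n:ℝ) * sQ q) * y)) (Set.Ioi 0) :=
    fun x hx => main_eq hq0 hq1 hx
  constructor
  · exact ((analyticG hq0 hq1).contDiffOn (uniqueDiffOn_Ioi 0)).congr hEq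
  · intro n x hx
    rw [iteratedDerivWithin_congr hEq hx]
    rw [iteratedDerivWithin_tsum_exp (m := fun n => (n:ℝ) * sQ q)
      (fun n => by positivity) (cC_nonneg hq0 hq1)
      (fun δ hδ => summable_cC hq0 hq1 hδ) n x hx]
    rw [← mul_assoc, ← mul_pow]
    norm_num
    apply tsum_nonneg
    intro k
    have h1 := cC_nonneg hq0 hq1 k
    positivity
end

section
/- Let q > 1. For every x > 0, the inequality (ψ_q'(x))² + ψ_q''(x) > 0 holds. -/
/-!
Put `L = log q`, `r = q⁻¹`, `t = q ^ (-x)` and `S p = ∑ (k+1)^p t^(k+1) / (1 - r^(k+1))`.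
Termwise differentiation gives `ψ_q' = L (1 + L S 1)` and `ψ_q'' = -L³ S 2`, so the claim is
`L S 2 < (1 + L S 1)²`. Expanding `1 / (1 - r^(k+1))` geometrically and resumming (a Lambert
series identity) gives `L S 1 = ∑ₘ aₘ` and `L S 2 = ∑ₘ aₘ (1 + yₘ) / (1 - yₘ)`, where
`yₘ = t rᵐ` and `aₘ = L yₘ / (1 - yₘ)²`; the tails `Qₘ = ∑_{n ≥ m} aₙ` are `ψ_q'(x + m) / L - 1`.
From `u / (1 - e^{-u}) ≥ 1 + u / 2` one gets a lower bound for `Qₘ₊₁`, which together with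
`1 - r ≤ L` yields `aₘ (1 + yₘ) / (1 - yₘ) ≤ 2 aₘ + Qₘ² - Qₘ₊₁²`. Summing telescopes to
`L S 2 ≤ 2 Q₀ + Q₀² < (1 + Q₀)²`.
-/

open Real Set Filter Topology

theorem hasSum_succ_mul_pow {s : ℝ} (hs : |s| < 1) :
    HasSum (fun k : ℕ => ((k : ℝ) + 1) * s ^ (k + 1)) (s / (1 - s) ^ 2) := by
  have h := hasSum_coe_mul_geometric_of_norm_lt_one (𝕜 := ℝ) (by simpa using hs)
  simpa using (hasSum_nat_add_iff' 1).2 h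

theorem hasSum_succ_sq_mul_pow {s : ℝ} (hs : |s| < 1) :
    HasSum (fun k : ℕ => ((k : ℝ) + 1) ^ 2 * s ^ (k + 1)) (s * (1 + s) / (1 - s) ^ 3) := by
  have h1s : 1 - s ≠ 0 := by linarith [(abs_lt.1 hs).2]
  have hchoose : HasSum (fun k : ℕ => ((k : ℝ) + 1) * ((k : ℝ) + 2) * s ^ (k + 1))
      (2 * s / (1 - s) ^ 3) := by
    have h := (hasSum_choose_mul_geometric_of_norm_lt_one (𝕜 := ℝ) 2
      (by simpa using hs)).mul_left (2 * s)
    rw [show 2 * s / (1 - s) ^ 3 = 2 * s * (1 / (1 - s) ^ (2 + 1)) by ring]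
    refine h.congr_fun fun k => ?_
    rw [Nat.cast_choose_two]
    push_cast
    ring
  rw [show s * (1 + s) / (1 - s) ^ 3 = 2 * s / (1 - s) ^ 3 - s / (1 - s) ^ 2 by
    field_simp; ring]
  exact (hchoose.sub (hasSum_succ_mul_pow hs)).congr_fun fun k => by ring

theorem summable_succ_pow_mul_pow (p : ℕ) {s : ℝ} (hs : |s| < 1) :
    Summable fun k : ℕ => ((k : ℝ) + 1) ^ p * s ^ (k + 1) := by
  have h := summable_pow_mul_geometric_of_norm_lt_one (R := ℝ) p (by simpa using hs)
  exact_mod_cast (summable_nat_add_iff 1).2 h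

section Lambert

variable {r : ℝ}

theorem abs_mul_pow_div_one_sub_pow_le (hr0 : 0 ≤ r) (hr1 : r < 1) (c : ℝ) {t ρ : ℝ}
    (ht : |t| ≤ ρ) (k : ℕ) :
    |c * t ^ (k + 1) / (1 - r ^ (k + 1))| ≤ (1 - r)⁻¹ * (|c| * ρ ^ (k + 1)) := by
  have hrk : r ^ (k + 1) ≤ r := pow_le_of_le_one hr0 hr1.le k.add_one_ne_zero
  have hden : 0 < 1 - r ^ (k + 1) := by linarith
  rw [abs_div, abs_mul, abs_pow, abs_of_pos hden, div_eq_mul_inv, mul_comm]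
  gcongr

theorem summable_mul_pow_div_one_sub_pow (hr0 : 0 ≤ r) (hr1 : r < 1) {c : ℕ → ℝ} {y : ℝ}
    (hs : Summable fun k => c k * y ^ (k + 1)) :
    Summable fun k => c k * y ^ (k + 1) / (1 - r ^ (k + 1)) := by
  refine .of_norm_bounded (hs.abs.mul_left (1 - r)⁻¹) fun k => ?_
  simpa only [Real.norm_eq_abs, abs_mul, abs_pow] using
    abs_mul_pow_div_one_sub_pow_le hr0 hr1 (c k) le_rfl k

/-- Expanding `1 / (1 - r ^ (k + 1))` geometrically and exchanging the two sums. -/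
theorem hasSum_lambert (hr0 : 0 ≤ r) (hr1 : r < 1) {c : ℕ → ℝ} (hc : ∀ k, 0 ≤ c k) {y : ℝ}
    (hy : 0 ≤ y) (hs : Summable fun k => c k * y ^ (k + 1)) :
    HasSum (fun m : ℕ => ∑' k, c k * (y * r ^ m) ^ (k + 1))
      (∑' k, c k * y ^ (k + 1) / (1 - r ^ (k + 1))) := by
  set f : ℕ × ℕ → ℝ := fun km => c km.1 * (y * r ^ km.2) ^ (km.1 + 1)
  have hrow : ∀ k, HasSum (fun m => f (k, m)) (c k * y ^ (k + 1) / (1 - r ^ (k + 1))) := by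
    intro k
    have h := (hasSum_geometric_of_lt_one (pow_nonneg hr0 (k + 1))
      (pow_lt_one₀ hr0 hr1 k.add_one_ne_zero)).mul_left (c k * y ^ (k + 1))
    rw [div_eq_mul_inv]
    exact h.congr_fun fun m => by simp only [f]; ring
  have hf : HasSum f (∑' k, c k * y ^ (k + 1) / (1 - r ^ (k + 1))) := by
    have hsum : Summable f := (summable_prod_of_nonneg fun km => by
      have := hc km.1; positivity).2
      ⟨fun k => (hrow k).summable, by
        simpa only [(hrow _).tsum_eq] using summable_mul_pow_div_one_sub_pow hr0 hr1 hs⟩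
    rw [← tsum_congr fun k => (hrow k).tsum_eq, ← hsum.tsum_prod' fun k => (hrow k).summable]
    exact hsum.hasSum
  refine ((Equiv.prodComm ℕ ℕ).hasSum_iff.2 hf).prod_fiberwise fun m => Summable.hasSum ?_
  simp only [Function.comp_apply, Equiv.prodComm_apply, Prod.swap_prod_mk, f]
  have hrm : r ^ m ≤ 1 := pow_le_one₀ hr0 hr1.le
  refine hs.of_nonneg_of_le (fun k => by have := hc k; positivity) fun k => ?_
  gcongr
  · exact hc k
  · exact mul_le_of_le_one_right hy hrm

theorem mul_pow_lt_one (hr0 : 0 ≤ r) (hr1 : r ≤ 1) {y : ℝ} (hy0 : 0 ≤ y) (hy1 : y < 1) (m : ℕ) :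
    y * r ^ m < 1 :=
  (mul_le_of_le_one_right hy0 (pow_le_one₀ hr0 hr1)).trans_lt hy1

theorem hasSum_lambert_succ (hr0 : 0 ≤ r) (hr1 : r < 1) {y : ℝ} (hy0 : 0 ≤ y) (hy1 : y < 1) :
    HasSum (fun m : ℕ => y * r ^ m / (1 - y * r ^ m) ^ 2)
      (∑' k : ℕ, ((k : ℝ) + 1) * y ^ (k + 1) / (1 - r ^ (k + 1))) := by
  have h := hasSum_lambert hr0 hr1 (c := fun k => (k : ℝ) + 1) (fun k => by positivity) hy0
    (hasSum_succ_mul_pow (abs_lt.2 ⟨by linarith, hy1⟩)).summable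
  refine h.congr_fun fun m => (hasSum_succ_mul_pow ?_).tsum_eq.symm
  rw [abs_of_nonneg (by positivity)]
  exact mul_pow_lt_one hr0 hr1.le hy0 hy1 m

theorem hasSum_lambert_succ_sq (hr0 : 0 ≤ r) (hr1 : r < 1) {y : ℝ} (hy0 : 0 ≤ y) (hy1 : y < 1) :
    HasSum (fun m : ℕ => y * r ^ m * (1 + y * r ^ m) / (1 - y * r ^ m) ^ 3)
      (∑' k : ℕ, ((k : ℝ) + 1) ^ 2 * y ^ (k + 1) / (1 - r ^ (k + 1))) := by
  have h := hasSum_lambert hr0 hr1 (c := fun k => ((k : ℝ) + 1) ^ 2) (fun k => by positivity) hy0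
    (hasSum_succ_sq_mul_pow (abs_lt.2 ⟨by linarith, hy1⟩)).summable
  refine h.congr_fun fun m => (hasSum_succ_sq_mul_pow ?_).tsum_eq.symm
  rw [abs_of_nonneg (by positivity)]
  exact mul_pow_lt_one hr0 hr1.le hy0 hy1 m

end Lambert

theorem one_add_half_mul_one_sub_exp_neg_le {u : ℝ} (hu : 0 ≤ u) :
    (1 + u / 2) * (1 - exp (-u)) ≤ u := by
  set g : ℝ → ℝ := fun v => (2 + v) * exp (-v) + v
  have hg : ∀ v, HasDerivAt g (1 - (1 + v) * exp (-v)) v := fun v => by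
    refine ((((hasDerivAt_id v).const_add 2).mul (hasDerivAt_neg v).exp).add
      (hasDerivAt_id v)).congr_deriv ?_
    simp only [id]
    ring
  have hmono : Monotone g := monotone_of_deriv_nonneg (fun v => (hg v).differentiableAt)
    fun v => by
      rw [(hg v).deriv, sub_nonneg]
      calc (1 + v) * exp (-v) ≤ exp v * exp (-v) := by gcongr; linarith [add_one_le_exp v]
        _ = 1 := by rw [← exp_add, add_neg_cancel, exp_zero]
  have := hmono hu
  simp only [g, neg_zero, exp_zero] at this
  linarith

theorem le_tsum_lambert_succ {q y : ℝ} (hq : 1 < q) (hy0 : 0 ≤ y) (hy1 : y < 1) :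
    y / (1 - y) + log q / 2 * (y / (1 - y) ^ 2) ≤
      ∑' n : ℕ, log q * (y * q⁻¹ ^ n / (1 - y * q⁻¹ ^ n) ^ 2) := by
  have hr0 : 0 ≤ q⁻¹ := inv_nonneg.2 (by linarith)
  have hr1 : q⁻¹ < 1 := inv_lt_one_of_one_lt₀ hq
  have hy : |y| < 1 := abs_lt.2 ⟨by linarith, hy1⟩
  rw [((hasSum_lambert_succ hr0 hr1 hy0 hy1).mul_left (log q)).tsum_eq, ← tsum_mul_left]
  have hgeom : HasSum (fun k : ℕ => y ^ (k + 1)) (y / (1 - y)) := by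
    rw [div_eq_mul_inv]
    exact ((hasSum_geometric_of_lt_one hy0 hy1).mul_left y).congr_fun fun k => pow_succ' y k
  refine hasSum_le (fun k => ?_) (hgeom.add ((hasSum_succ_mul_pow hy).mul_left (log q / 2)))
    ((summable_mul_pow_div_one_sub_pow hr0 hr1
      (hasSum_succ_mul_pow hy).summable).mul_left (log q)).hasSum
  set u := ((k : ℝ) + 1) * log q
  have hexp : exp (-u) = q⁻¹ ^ (k + 1) := by
    rw [exp_neg, show u = log (q ^ (k + 1)) by rw [log_pow]; push_cast; rfl,
      exp_log (by positivity), inv_pow]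
  have hden : 0 < 1 - q⁻¹ ^ (k + 1) := by
    linarith [pow_lt_one₀ hr0 hr1 k.add_one_ne_zero]
  have hu : 1 + u / 2 ≤ u / (1 - q⁻¹ ^ (k + 1)) := by
    rw [le_div_iff₀ hden, ← hexp]
    exact one_add_half_mul_one_sub_exp_neg_le (by positivity [log_pos hq])
  calc y ^ (k + 1) + log q / 2 * (((k : ℝ) + 1) * y ^ (k + 1))
      = (1 + u / 2) * y ^ (k + 1) := by ring
    _ ≤ u / (1 - q⁻¹ ^ (k + 1)) * y ^ (k + 1) := by gcongr
    _ = log q * (((k : ℝ) + 1) * y ^ (k + 1) / (1 - q⁻¹ ^ (k + 1))) := by ring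

theorem one_add_div_one_sub_le {L r y : ℝ} (hr0 : 0 ≤ r) (hr1 : r ≤ 1) (hrL : 1 - r ≤ L)
    (hy0 : 0 ≤ y) (hy1 : y < 1) :
    (1 + y) / (1 - y) ≤
      2 + L * (y / (1 - y) ^ 2) +
        2 * (r * y / (1 - r * y) + L / 2 * (r * y / (1 - r * y) ^ 2)) := by
  have hy : 0 < 1 - y := by linarith
  have hry : 0 < 1 - r * y := by nlinarith
  have h1r : 0 ≤ 1 - r := by linarith
  have hL : (1 - r) * (y / (1 - y) ^ 2) + (1 - r) * (r * y / (1 - r * y) ^ 2) ≤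
      L * (y / (1 - y) ^ 2) + L * (r * y / (1 - r * y) ^ 2) := by
    gcongr
  have hpoly : (1 - r) * (y / (1 - y) ^ 2) + 2 * (r * y / (1 - r * y)) +
      (1 - r) * (r * y / (1 - r * y) ^ 2) - ((1 + y) / (1 - y) - 2) =
      ((1 - y) ^ 4 + (1 - r) * (1 + r) * y * (1 - y) ^ 3 + (1 - r) ^ 3 * y ^ 3) /
        ((1 - y) ^ 2 * (1 - r * y) ^ 2) := by
    field_simp
    ring
  have : 0 ≤ ((1 - y) ^ 4 + (1 - r) * (1 + r) * y * (1 - y) ^ 3 + (1 - r) ^ 3 * y ^ 3) /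
      ((1 - y) ^ 2 * (1 - r * y) ^ 2) := by positivity
  linarith

theorem tsum_le_two_mul_tsum_add_sq {a b : ℕ → ℝ} (ha0 : ∀ m, 0 ≤ a m) (ha : Summable a)
    (hb0 : ∀ m, 0 ≤ b m) (hab : ∀ m, b m ≤ a m * (2 + a m + 2 * ∑' n, a (n + (m + 1)))) :
    ∑' m, b m ≤ 2 * ∑' m, a m + (∑' m, a m) ^ 2 := by
  set Q : ℕ → ℝ := fun m => ∑' n, a (n + m)
  have hQ : ∀ m, Q m = a m + Q (m + 1) := fun m => by
    simp only [Q, ((summable_nat_add_iff m).2 ha).tsum_eq_zero_add, zero_add, add_right_comm _ 1,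
      add_assoc]
  have hstep : ∀ m, b m ≤ 2 * a m + (Q m ^ 2 - Q (m + 1) ^ 2) := fun m => by
    rw [hQ m]
    linarith [hab m]
  have hQ0 : Q 0 = ∑' m, a m := by simp only [Q, add_zero]
  refine Real.tsum_le_of_sum_range_le hb0 fun M => ?_
  calc ∑ m ∈ Finset.range M, b m
      ≤ ∑ m ∈ Finset.range M, (2 * a m + (Q m ^ 2 - Q (m + 1) ^ 2)) :=
        Finset.sum_le_sum fun m _ => hstep m
    _ = 2 * ∑ m ∈ Finset.range M, a m + (Q 0 ^ 2 - Q M ^ 2) := by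
        rw [Finset.sum_add_distrib, Finset.sum_range_sub' (fun m => Q m ^ 2), Finset.mul_sum]
    _ ≤ 2 * ∑' m, a m + (∑' m, a m) ^ 2 := by
        rw [hQ0]
        linarith [ha.sum_le_tsum (Finset.range M) fun m _ => ha0 m, sq_nonneg (Q M)]

theorem log_mul_div_one_sub_pow_three_le {q y : ℝ} (hq : 1 < q) (hy0 : 0 ≤ y) (hy1 : y < 1) :
    log q * (y * (1 + y) / (1 - y) ^ 3) ≤
      log q * (y / (1 - y) ^ 2) * (2 + log q * (y / (1 - y) ^ 2) +
        2 * ∑' n : ℕ, log q * (q⁻¹ * y * q⁻¹ ^ n / (1 - q⁻¹ * y * q⁻¹ ^ n) ^ 2)) := by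
  have hr0 : 0 ≤ q⁻¹ := inv_nonneg.2 (by linarith)
  have hr1 : q⁻¹ < 1 := inv_lt_one_of_one_lt₀ hq
  have hrL : 1 - q⁻¹ ≤ log q := one_sub_inv_le_log_of_pos (by linarith)
  have hy : 0 < 1 - y := by linarith
  have ha : 0 ≤ log q * (y / (1 - y) ^ 2) := by positivity [log_pos hq]
  have htail := le_tsum_lambert_succ hq (mul_nonneg hr0 hy0)
    ((mul_le_of_le_one_left hy0 hr1.le).trans_lt hy1)
  calc log q * (y * (1 + y) / (1 - y) ^ 3) = log q * (y / (1 - y) ^ 2) * ((1 + y) / (1 - y)) := by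
        field_simp
    _ ≤ log q * (y / (1 - y) ^ 2) * (2 + log q * (y / (1 - y) ^ 2) +
          2 * (q⁻¹ * y / (1 - q⁻¹ * y) + log q / 2 * (q⁻¹ * y / (1 - q⁻¹ * y) ^ 2))) :=
        mul_le_mul_of_nonneg_left (one_add_div_one_sub_le hr0 hr1.le hrL hy0 hy1) ha
    _ ≤ _ := by gcongr

/-- `∑_{k ≥ 1} k^p q^{-kx} / (1 - q^{-k})`, indexed from `0`. For `p ≥ 1` the `p`-th derivative of
`ψ_q` is `-log q * (-log q)^p` times it, plus `log q` when `p = 1`. -/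
noncomputable def qPolygammaSeries (q : ℝ) (p : ℕ) (x : ℝ) : ℝ :=
  ∑' k : ℕ, ((k : ℝ) + 1) ^ p * (q ^ (-x)) ^ (k + 1) / (1 - q⁻¹ ^ (k + 1))

theorem rpow_neg_succ_mul {q : ℝ} (hq : 0 ≤ q) (k : ℕ) (x : ℝ) :
    q ^ (-(((k : ℝ) + 1) * x)) = (q ^ (-x)) ^ (k + 1) := by
  rw [← rpow_natCast, ← rpow_mul hq]
  push_cast
  ring_nf

theorem qDigammaGt_eq {q : ℝ} (hq : 0 ≤ q) :
    qDigammaGt q = fun x => -log (q - 1) + log q * (x - 1 / 2 - qPolygammaSeries q 0 x) := by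
  have hr : ∀ k : ℕ, q ^ (-((k : ℝ) + 1)) = q⁻¹ ^ (k + 1) := fun k => by
    simpa [rpow_neg_one] using rpow_neg_succ_mul hq k 1
  ext x
  simp only [qDigammaGt, qPolygammaSeries, pow_zero, one_mul, rpow_neg_succ_mul hq, hr]

theorem abs_rpow_neg_lt_one {q x : ℝ} (hq : 1 < q) (hx : 0 < x) : |q ^ (-x)| < 1 := by
  rw [abs_of_nonneg (rpow_nonneg (by linarith) _)]
  exact rpow_lt_one_of_one_lt_of_neg hq (neg_neg_of_pos hx)

theorem hasDerivAt_qPolygammaSeries_term {q : ℝ} (hq : 0 < q) (p k : ℕ) (x : ℝ) :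
    HasDerivAt (fun y => ((k : ℝ) + 1) ^ p * (q ^ (-y)) ^ (k + 1) / (1 - q⁻¹ ^ (k + 1)))
      (-log q * (((k : ℝ) + 1) ^ (p + 1) * (q ^ (-x)) ^ (k + 1) / (1 - q⁻¹ ^ (k + 1)))) x := by
  refine (((((hasDerivAt_neg x).const_rpow hq).pow (k + 1)).const_mul
    (((k : ℝ) + 1) ^ p)).div_const (1 - q⁻¹ ^ (k + 1))).congr_deriv ?_
  push_cast
  ring

theorem hasDerivAt_qPolygammaSeries {q : ℝ} (hq : 1 < q) (p : ℕ) {x : ℝ} (hx : 0 < x) :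
    HasDerivAt (qPolygammaSeries q p) (-log q * qPolygammaSeries q (p + 1) x) x := by
  have hq0 : 0 < q := by linarith
  have hr0 : 0 ≤ q⁻¹ := inv_nonneg.2 hq0.le
  have hr1 : q⁻¹ < 1 := inv_lt_one_of_one_lt₀ hq
  set ρ := q ^ (-(x / 2))
  have hbound : ∀ (k : ℕ), ∀ y ∈ Ioi (x / 2),
      ‖-log q * (((k : ℝ) + 1) ^ (p + 1) * (q ^ (-y)) ^ (k + 1) / (1 - q⁻¹ ^ (k + 1)))‖ ≤
        log q * ((1 - q⁻¹)⁻¹ * (((k : ℝ) + 1) ^ (p + 1) * ρ ^ (k + 1))) := by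
    intro k y hy
    have hy' : |q ^ (-y)| ≤ ρ := by
      rw [abs_of_nonneg (rpow_nonneg hq0.le _)]
      exact rpow_le_rpow_of_exponent_le hq.le (by linarith [mem_Ioi.1 hy])
    have h := abs_mul_pow_div_one_sub_pow_le hr0 hr1 (((k : ℝ) + 1) ^ (p + 1)) hy' k
    rw [abs_of_nonneg (by positivity : (0 : ℝ) ≤ ((k : ℝ) + 1) ^ (p + 1))] at h
    rw [norm_mul, norm_neg, Real.norm_eq_abs, abs_of_pos (log_pos hq)]
    exact mul_le_mul_of_nonneg_left h (log_pos hq).le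
  have hmajorant := ((summable_succ_pow_mul_pow (p + 1)
    (abs_rpow_neg_lt_one hq (half_pos hx))).mul_left (1 - q⁻¹)⁻¹).mul_left (log q)
  have hsum := summable_mul_pow_div_one_sub_pow hr0 hr1
    (summable_succ_pow_mul_pow p (abs_rpow_neg_lt_one hq hx))
  have hx' : x ∈ Ioi (x / 2) := half_lt_self hx
  have := hasDerivAt_tsum_of_isPreconnected hmajorant isOpen_Ioi isPreconnected_Ioi
    (fun k y _ => hasDerivAt_qPolygammaSeries_term hq0 p k y) hbound hx' hsum hx'
  rwa [tsum_mul_left] at this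

theorem log_mul_qPolygammaSeries_two_lt {q x : ℝ} (hq : 1 < q) (hx : 0 < x) :
    log q * qPolygammaSeries q 2 x < (1 + log q * qPolygammaSeries q 1 x) ^ 2 := by
  have hr0 : 0 ≤ q⁻¹ := inv_nonneg.2 (by linarith)
  have hr1 : q⁻¹ < 1 := inv_lt_one_of_one_lt₀ hq
  set t := q ^ (-x)
  have ht0 : 0 ≤ t := rpow_nonneg (by linarith) _
  have ht1 : t < 1 := rpow_lt_one_of_one_lt_of_neg hq (by linarith)
  set a : ℕ → ℝ := fun m => log q * (t * q⁻¹ ^ m / (1 - t * q⁻¹ ^ m) ^ 2)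
  set b : ℕ → ℝ := fun m => log q * (t * q⁻¹ ^ m * (1 + t * q⁻¹ ^ m) / (1 - t * q⁻¹ ^ m) ^ 3)
  have hA : HasSum a (log q * qPolygammaSeries q 1 x) := by
    simpa only [qPolygammaSeries, pow_one] using
      (hasSum_lambert_succ hr0 hr1 ht0 ht1).mul_left (log q)
  have hB : HasSum b (log q * qPolygammaSeries q 2 x) :=
    (hasSum_lambert_succ_sq hr0 hr1 ht0 ht1).mul_left (log q)
  have hy : ∀ m, 0 ≤ t * q⁻¹ ^ m ∧ t * q⁻¹ ^ m < 1 := fun m =>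
    ⟨by positivity, mul_pow_lt_one hr0 hr1.le ht0 ht1 m⟩
  have ha0 : ∀ m, 0 ≤ a m := fun m => by
    have := hy m
    positivity [log_pos hq]
  have hab : ∀ m, b m ≤ a m * (2 + a m + 2 * ∑' n, a (n + (m + 1))) := fun m => by
    have hshift : ∑' n, a (n + (m + 1)) = ∑' n : ℕ, log q *
        (q⁻¹ * (t * q⁻¹ ^ m) * q⁻¹ ^ n / (1 - q⁻¹ * (t * q⁻¹ ^ m) * q⁻¹ ^ n) ^ 2) :=
      tsum_congr fun n => by simp only [a]; ring_nf
    rw [hshift]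
    exact log_mul_div_one_sub_pow_three_le hq (hy m).1 (hy m).2
  have hb0 : ∀ m, 0 ≤ b m := fun m => by
    obtain ⟨hy0, hy1⟩ := hy m
    have : 0 < 1 - t * q⁻¹ ^ m := by linarith
    positivity [log_pos hq]
  have := tsum_le_two_mul_tsum_add_sq ha0 hA.summable hb0 hab
  rw [hA.tsum_eq, hB.tsum_eq] at this
  linarith

/-- For `q > 1` and `x > 0`, `(ψ_q′(x))² + ψ_q″(x) > 0`. -/
theorem positivity_q_gt_one (q : ℝ) (hq : 1 < q) (x : ℝ) (hx : 0 < x) :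
    0 < (deriv (qDigammaGt q) x) ^ 2 + deriv (deriv (qDigammaGt q)) x := by
  have hL : 0 < log q := log_pos hq
  have hψ' : ∀ y > 0,
      HasDerivAt (qDigammaGt q) (log q * (1 + log q * qPolygammaSeries q 1 y)) y := by
    intro y hy
    rw [qDigammaGt_eq (by linarith)]
    refine ((((hasDerivAt_id y).sub_const (1 / 2)).sub
      (hasDerivAt_qPolygammaSeries hq 0 hy)).const_mul (log q)).const_add _ |>.congr_deriv ?_
    ring
  have hψ'' : HasDerivAt (deriv (qDigammaGt q))
      (log q * (log q * (-log q * qPolygammaSeries q 2 x))) x :=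
    ((((hasDerivAt_qPolygammaSeries hq 1 hx).const_mul (log q)).const_add 1).const_mul
      (log q)).congr_of_eventuallyEq
      (eventually_of_mem (Ioi_mem_nhds hx) fun y hy => (hψ' y hy).deriv)
  rw [(hψ' x hx).deriv, hψ''.deriv]
  calc 0 < log q ^ 2 * ((1 + log q * qPolygammaSeries q 1 x) ^ 2 -
        log q * qPolygammaSeries q 2 x) :=
        mul_pos (pow_pos hL 2) (sub_pos.2 (log_mul_qPolygammaSeries_two_lt hq hx))
    _ = _ := by ring
end

section
/- Let q > 1 and let i be an integer with i ≥ 3. Then ∑_{j=1}^{i−1} j(i−j)(q^i − 1)/((q^j − 1)(q^{i−j} − 1)) > i(i−2)/ln q. -/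
/-!
With `a = qʲ - 1`, `b = q^{i-j} - 1` and `L = log q`, the `j`-th term equals
`j(i-j)(1 + 1/a + 1/b)`. The Padé-type bound `1/(eᵗ - 1) > 1/t - 1/2` for `t > 0` gives
`1/a > 1/(jL) - 1/2` and `1/b > 1/((i-j)L) - 1/2`, so every term exceeds `i/L`, and the
`i - 1` terms together exceed `i(i-1)/L > i(i-2)/L`.
-/

open Real Finset

namespace Real

theorem two_sub_mul_exp_lt_two_add {t : ℝ} (ht : 0 < t) : (2 - t) * exp t < 2 + t := by
  let f : ℝ → ℝ := fun t ↦ 2 + t - (2 - t) * exp t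
  have hf' (x : ℝ) : HasDerivAt f (1 - (1 - x) * exp x) x :=
    (((hasDerivAt_id' x).const_add 2).sub
      (((hasDerivAt_id' x).const_sub 2).mul (hasDerivAt_exp x))).congr_deriv (by ring)
  have hmono : StrictMonoOn f (Set.Ici 0) := by
    refine strictMonoOn_of_deriv_pos (convex_Ici 0) (by fun_prop) fun x hx ↦ ?_
    rw [interior_Ici, Set.mem_Ioi] at hx
    have hlt : (1 - x) * exp x < 1 := by
      calc (1 - x) * exp x < exp (-x) * exp x :=
            mul_lt_mul_of_pos_right (one_sub_lt_exp_neg hx.ne') (exp_pos x)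
        _ = 1 := by rw [← exp_add, neg_add_cancel, exp_zero]
    rw [(hf' x).deriv]
    linarith
  have hf0 := hmono Set.self_mem_Ici ht.le ht
  simp only [f, exp_zero] at hf0
  linarith

theorem one_div_sub_half_lt_one_div_exp_sub_one {t : ℝ} (ht : 0 < t) :
    1 / t - 1 / 2 < 1 / (exp t - 1) := by
  have he : 0 < exp t - 1 := sub_pos.2 (one_lt_exp_iff.2 ht)
  rw [div_sub_div _ _ ht.ne' two_ne_zero, div_lt_div_iff₀ (by positivity) he]
  nlinarith [two_sub_mul_exp_lt_two_add ht]

theorem one_div_sub_half_lt_one_div_pow_sub_one {q : ℝ} (hq : 1 < q) {n : ℕ} (hn : 0 < n) :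
    1 / (n * log q) - 1 / 2 < 1 / (q ^ n - 1) := by
  have h := one_div_sub_half_lt_one_div_exp_sub_one (mul_pos (Nat.cast_pos.2 hn) (log_pos hq))
  rwa [exp_nat_mul, exp_log (by linarith)] at h

theorem add_div_log_lt_mul_pow_add_sub_one_div {q : ℝ} (hq : 1 < q) {m n : ℕ}
    (hm : 0 < m) (hn : 0 < n) :
    ((m : ℝ) + n) / log q < m * n * (q ^ (m + n) - 1) / ((q ^ m - 1) * (q ^ n - 1)) := by
  have hL : 0 < log q := log_pos hq
  have hm' : (0 : ℝ) < m := Nat.cast_pos.2 hm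
  have hn' : (0 : ℝ) < n := Nat.cast_pos.2 hn
  have ha : 0 < q ^ m - 1 := sub_pos.2 (one_lt_pow₀ hq hm.ne')
  have hb : 0 < q ^ n - 1 := sub_pos.2 (one_lt_pow₀ hq hn.ne')
  have hsplit : m * n * (q ^ (m + n) - 1) / ((q ^ m - 1) * (q ^ n - 1)) =
      m * n + m * n * (1 / (q ^ m - 1)) + m * n * (1 / (q ^ n - 1)) := by
    field_simp
    ring
  have hA := mul_lt_mul_of_pos_left (one_div_sub_half_lt_one_div_pow_sub_one hq hm)
    (mul_pos hm' hn')
  have hB := mul_lt_mul_of_pos_left (one_div_sub_half_lt_one_div_pow_sub_one hq hn)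
    (mul_pos hm' hn')
  have hlhs : ((m : ℝ) + n) / log q = m * n +
      m * n * (1 / (m * log q) - 1 / 2) + m * n * (1 / (n * log q) - 1 / 2) := by
    field_simp
    ring
  rw [hsplit, hlhs]
  linarith

end Real

/-- For `q > 1` and an integer `i ≥ 3`,
`∑_{j=1}^{i−1} j(i−j)(qⁱ − 1)/((qʲ − 1)(q^{i−j} − 1)) > i(i−2)/ln q`. -/
theorem sum_gt (q : ℝ) (hq : 1 < q) (i : ℕ) (hi : 3 ≤ i) :
    (i : ℝ) * ((i : ℝ) - 2) / Real.log q <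
      ∑ j ∈ Finset.Icc 1 (i - 1),
        (j : ℝ) * ((i : ℝ) - (j : ℝ)) * (q ^ i - 1) /
          ((q ^ j - 1) * (q ^ (i - j) - 1)) := by
  have hterm : ∀ j ∈ Icc 1 (i - 1), (i : ℝ) / log q <
      (j : ℝ) * ((i : ℝ) - (j : ℝ)) * (q ^ i - 1) / ((q ^ j - 1) * (q ^ (i - j) - 1)) := by
    intro j hj
    rw [mem_Icc] at hj
    obtain ⟨k, rfl⟩ : ∃ k, i = j + k := ⟨i - j, by omega⟩
    have hk : 0 < k := by omega
    simpa [Nat.add_sub_cancel_left] using add_div_log_lt_mul_pow_add_sub_one_div hq hj.1 hk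
  have hsum := sum_lt_sum_of_nonempty (nonempty_Icc.2 (by omega)) hterm
  rw [sum_const, Nat.card_Icc, Nat.add_sub_cancel, nsmul_eq_mul,
    Nat.cast_sub (by omega), Nat.cast_one] at hsum
  refine lt_of_le_of_lt ?_ hsum
  rw [mul_div_assoc', div_le_div_iff_of_pos_right (log_pos hq)]
  nlinarith
end

section
/- Let q > 1. For every x > 0, the double inequality ψ_q(1) − ln q − ln(exp((ln q)/(q^x − 1)) − 1) < ψ_q(x) < ln(ln q/(q − 1)) − (ln q)/2 − ln(exp((ln q)/(q^x − 1)) − 1) holds. -/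
open Real Set Filter Topology

/-!
Put `L = log q`, `t = q^{-x} ∈ (0, 1)` and `f = L t / (1 - t) = L / (q^x - 1)`. Then
`ψ_q(x) = -log (q - 1) + L (x - 1/2 - S t)` with `S t = ∑_{n ≥ 1} t^n / (1 - q^{-n})`, and
`S t = t / (1 - t) + S (t / q)`.

The upper bound reduces to `∑_{n ≥ 1} t^n L G'(n L) < G f` for the strictly concave function
`G y = log (y / (1 - e^{-y}))`, `G 0 = 0`. Concavity gives `L G'(n L) < G (n L) - G ((n - 1) L)`,
which telescopes to `(1 - t) ∑_{n ≥ 0} t^n G (n L)`, and this is at most `G f` by Jensen's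
inequality for the geometric weights `(1 - t) t^n`, whose barycentre is `∑ (1 - t) t^n n L = f`.

The lower bound only needs `1 - q^{-n} ≤ n L`: termwise against the logarithm series it gives
`L (S (1/q) - S (t/q)) ≥ log ((1 - t/q) / (1 - 1/q))`, and together with `e^{-f} ≤ 1 / (1 + f)`
it gives `t (1 - 1/q) / (1 - t/q) < 1 - e^{-f}`.
-/

namespace QDigamma

/-- The logarithm of the Todd function `y / (1 - e^{-y})`. The junk value `log 0 = 0` gives
`logTodd 0 = 0`, which is also its limit at `0`. -/
noncomputable def logTodd (y : ℝ) : ℝ := log y - log (1 - exp (-y))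

noncomputable def logToddDeriv (y : ℝ) : ℝ := y⁻¹ - (exp y - 1)⁻¹

lemma exp_sub_one_pos {y : ℝ} (hy : 0 < y) : 0 < exp y - 1 := sub_pos.2 (one_lt_exp_iff.2 hy)

@[simp]
lemma logTodd_zero : logTodd 0 = 0 := by simp [logTodd]

lemma continuousAt_logTodd_zero : ContinuousAt logTodd 0 := by
  set f := fun y : ℝ => 1 - exp (-y)
  have hf : HasDerivAt f 1 0 := by simpa using ((hasDerivAt_neg 0).exp).const_sub 1
  -- `(1 - e^{-y}) / y` is the slope of `f` at `0`, which `dslope` extends continuously.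
  have hrepr : logTodd = fun y => -log (dslope f 0 y) := by
    funext y
    rcases eq_or_ne y 0 with rfl | hy
    · simp [dslope_same, hf.deriv]
    · have hfy : f y ≠ 0 :=
        sub_ne_zero.2 fun h => hy (by simpa using (exp_eq_one_iff _).1 h.symm)
      rw [dslope_of_ne _ hy, slope_def_field, sub_zero, show f 0 = 0 by simp [f], sub_zero,
        log_div hfy hy]
      simp [logTodd, f]
  rw [hrepr]
  exact ((continuousAt_dslope_same.2 hf.differentiableAt).log (by simp [dslope_same, hf.deriv])).neg

lemma hasDerivAt_logTodd {y : ℝ} (hy : 0 < y) : HasDerivAt logTodd (logToddDeriv y) y := by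
  have hexp : 0 < 1 - exp (-y) := by simpa using hy
  have h : HasDerivAt (fun y => log y - log (1 - exp (-y)))
      (y⁻¹ - (-(exp (-y) * -1)) / (1 - exp (-y))) y :=
    (hasDerivAt_log hy.ne').sub (((hasDerivAt_neg y).exp.const_sub 1).log hexp.ne')
  refine h.congr_deriv ?_
  have := (exp_sub_one_pos hy).ne'
  rw [logToddDeriv, exp_neg]
  field_simp

lemma continuousOn_logTodd : ContinuousOn logTodd (Ici 0) := by
  intro y hy
  rcases (mem_Ici.1 hy).eq_or_lt with rfl | hy
  · exact continuousAt_logTodd_zero.continuousWithinAt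
  · exact (hasDerivAt_logTodd hy).continuousAt.continuousWithinAt

lemma sq_mul_exp_lt_sq_exp_sub_one {y : ℝ} (hy : 0 < y) : y ^ 2 * exp y < (exp y - 1) ^ 2 := by
  have hsinh : y < 2 * sinh (y / 2) := by linarith [self_lt_sinh_iff.2 (half_pos hy)]
  have hid : (exp y - 1) ^ 2 = (2 * sinh (y / 2)) ^ 2 * exp y := by
    have : exp y = exp (y / 2) ^ 2 := by rw [← exp_nat_mul]; ring_nf
    rw [sinh_eq, exp_neg, this]
    field_simp
  rw [hid]
  gcongr

lemma strictAntiOn_logToddDeriv : StrictAntiOn logToddDeriv (Ioi 0) := by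
  have hderiv {y : ℝ} (hy : 0 < y) :
      HasDerivAt logToddDeriv (-(y ^ 2)⁻¹ + exp y / (exp y - 1) ^ 2) y := by
    have h : HasDerivAt (fun y => y⁻¹ - (exp y - 1)⁻¹)
        (-(y ^ 2)⁻¹ - -exp y / (exp y - 1) ^ 2) y :=
      (hasDerivAt_inv hy.ne').sub (((hasDerivAt_exp y).sub_const 1).inv (exp_sub_one_pos hy).ne')
    exact h.congr_deriv (by ring)
  refine strictAntiOn_of_deriv_neg (convex_Ioi 0)
    (fun y hy => (hderiv hy).continuousAt.continuousWithinAt) fun y hy => ?_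
  rw [interior_Ioi] at hy
  have hy : 0 < y := hy
  rw [(hderiv hy).deriv, neg_add_lt_iff_lt_add, add_zero,
    div_lt_iff₀ (pow_pos (exp_sub_one_pos hy) 2), inv_mul_eq_div, lt_div_iff₀ (by positivity),
    mul_comm]
  exact sq_mul_exp_lt_sq_exp_sub_one hy

lemma strictConcaveOn_logTodd : StrictConcaveOn ℝ (Ici 0) logTodd :=
  StrictAntiOn.strictConcaveOn_of_deriv (convex_Ici 0) continuousOn_logTodd <| by
    rw [interior_Ici]
    exact strictAntiOn_logToddDeriv.congr fun y hy => (hasDerivAt_logTodd hy).deriv.symm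

lemma logToddDeriv_mul_sub_lt {a b : ℝ} (ha : 0 ≤ a) (hab : a < b) :
    logToddDeriv b * (b - a) < logTodd b - logTodd a := by
  have h := strictConcaveOn_logTodd.lt_slope_of_hasDerivAt ha (ha.trans hab.le) hab
    (hasDerivAt_logTodd (ha.trans_lt hab))
  rwa [slope_def_field, lt_div_iff₀ (sub_pos.2 hab)] at h

lemma logTodd_le_tangent {w z : ℝ} (hw : 0 ≤ w) (hz : 0 < z) :
    logTodd w ≤ logTodd z + logToddDeriv z * (w - z) := by
  rcases lt_trichotomy w z with h | rfl | h
  · linarith [logToddDeriv_mul_sub_lt hw h]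
  · simp
  · have := strictConcaveOn_logTodd.slope_lt_of_hasDerivAt hz.le hw h (hasDerivAt_logTodd hz)
    rw [slope_def_field, div_lt_iff₀ (sub_pos.2 h)] at this
    linarith

lemma logTodd_nonneg {y : ℝ} (hy : 0 ≤ y) : 0 ≤ logTodd y := by
  rcases hy.eq_or_lt with rfl | hy
  · simp
  · have := log_le_log (by simpa using hy) (by linarith [add_one_le_exp (-y)] : 1 - exp (-y) ≤ y)
    rw [logTodd]; linarith

lemma logToddDeriv_pos {y : ℝ} (hy : 0 < y) : 0 < logToddDeriv y :=
  sub_pos.2 <| inv_strictAnti₀ hy (by linarith [add_one_lt_exp hy.ne'])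

lemma hasSum_pow_mul_affine {t : ℝ} (ht₀ : 0 ≤ t) (ht₁ : t < 1) (c d : ℝ) :
    HasSum (fun k : ℕ => t ^ k * (c + d * k)) (c / (1 - t) + d * t / (1 - t) ^ 2) := by
  have hn : ‖t‖ < 1 := by rwa [norm_of_nonneg ht₀]
  rw [show (fun k : ℕ => t ^ k * (c + d * k)) = fun k : ℕ => c * t ^ k + d * (k * t ^ k) by
      funext k; ring,
    show c / (1 - t) + d * t / (1 - t) ^ 2 = c * (1 - t)⁻¹ + d * (t / (1 - t) ^ 2) by ring]
  exact ((hasSum_geometric_of_lt_one ht₀ ht₁).mul_left c).add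
    ((hasSum_coe_mul_geometric_of_norm_lt_one hn).mul_left d)

section Geometric

variable {L t : ℝ} (hL : 0 < L) (ht₁ : t < 1)
include hL ht₁

lemma summable_pow_mul_logTodd (ht₀ : 0 ≤ t) :
    Summable fun k : ℕ => t ^ k * logTodd (k * L) := by
  refine .of_nonneg_of_le
    (fun k => mul_nonneg (pow_nonneg ht₀ k) (logTodd_nonneg (by positivity))) (fun k => ?_)
    (hasSum_pow_mul_affine ht₀ ht₁ (logTodd 1 - logToddDeriv 1) (logToddDeriv 1 * L)).summable
  calc t ^ k * logTodd (k * L) ≤ t ^ k * (logTodd 1 + logToddDeriv 1 * (k * L - 1)) := by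
        gcongr; exact logTodd_le_tangent (by positivity) one_pos
    _ = _ := by ring

/-- Jensen's inequality, by comparison with the tangent line at the barycentre `L t / (1 - t)` of
the weights `(1 - t) t^k`. -/
lemma one_sub_mul_tsum_pow_mul_logTodd_le (ht₀ : 0 < t) :
    (1 - t) * ∑' k : ℕ, t ^ k * logTodd (k * L) ≤ logTodd (L * t / (1 - t)) := by
  have h1t : 0 < 1 - t := sub_pos.2 ht₁
  set f := L * t / (1 - t)
  have hf : 0 < f := by positivity
  have hle := hasSum_le (fun k : ℕ => ?_) (summable_pow_mul_logTodd hL ht₁ ht₀.le).hasSum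
    (hasSum_pow_mul_affine ht₀.le ht₁ (logTodd f - logToddDeriv f * f) (logToddDeriv f * L))
  · calc (1 - t) * ∑' k : ℕ, t ^ k * logTodd (k * L)
          ≤ (1 - t) * ((logTodd f - logToddDeriv f * f) / (1 - t)
            + logToddDeriv f * L * t / (1 - t) ^ 2) := by gcongr
      _ = logTodd f := by simp only [f]; field_simp; ring
  · calc t ^ k * logTodd (k * L) ≤ t ^ k * (logTodd f + logToddDeriv f * (k * L - f)) := by
          gcongr; exact logTodd_le_tangent (by positivity) hf
      _ = _ := by ring

lemma tsum_pow_succ_mul_logToddDeriv_lt (ht₀ : 0 < t) :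
    ∑' k : ℕ, t ^ (k + 1) * (L * logToddDeriv ((k + 1) * L)) < logTodd (L * t / (1 - t)) := by
  set a : ℕ → ℝ := fun k => t ^ k * logTodd (k * L)
  have ha := summable_pow_mul_logTodd hL ht₁ ht₀.le
  have hstep (k : ℕ) : t ^ (k + 1) * (L * logToddDeriv ((k + 1) * L)) < a (k + 1) - t * a k := by
    have h := logToddDeriv_mul_sub_lt (a := k * L) (b := (k + 1) * L) (by positivity) (by nlinarith)
    calc t ^ (k + 1) * (L * logToddDeriv ((k + 1) * L))
        = t ^ (k + 1) * (logToddDeriv ((k + 1) * L) * ((k + 1) * L - k * L)) := by ring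
      _ < t ^ (k + 1) * (logTodd ((k + 1) * L) - logTodd (k * L)) := by gcongr
      _ = a (k + 1) - t * a k := by simp only [a]; push_cast; ring
  have hshift := (summable_nat_add_iff 1).2 ha
  calc ∑' k : ℕ, t ^ (k + 1) * (L * logToddDeriv ((k + 1) * L))
      < ∑' k, (a (k + 1) - t * a k) :=
        Summable.tsum_lt_tsum_of_nonneg
          (fun k => (mul_pos (pow_pos ht₀ _) (mul_pos hL (logToddDeriv_pos (by positivity)))).le)
          (fun k => (hstep k).le) (hstep 0) (hshift.sub (ha.mul_left t))
    _ = (1 - t) * ∑' k, a k := by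
        rw [hshift.tsum_sub (ha.mul_left t), tsum_mul_left, ha.tsum_eq_zero_add]
        simp only [Nat.cast_zero, zero_mul, logTodd_zero, mul_zero, zero_add]
        ring
    _ ≤ _ := one_sub_mul_tsum_pow_mul_logTodd_le hL ht₁ ht₀

end Geometric

noncomputable def qSeries (q t : ℝ) : ℝ := ∑' k : ℕ, t ^ (k + 1) / (1 - q⁻¹ ^ (k + 1))

lemma qDigammaGt_eq_qSeries {q : ℝ} (hq : 0 ≤ q) (x : ℝ) :
    qDigammaGt q x = -log (q - 1) + log q * (x - 1 / 2 - qSeries q (q ^ (-x))) := by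
  unfold qDigammaGt qSeries
  congr 4 with k
  rw [show -(((k : ℝ) + 1) * x) = -x * ((k + 1 : ℕ) : ℝ) by push_cast; ring, rpow_mul hq,
    rpow_natCast, show -((k : ℝ) + 1) = -((k + 1 : ℕ) : ℝ) by push_cast; ring,
    rpow_neg hq ((k + 1 : ℕ) : ℝ), rpow_natCast, inv_pow]

section Series

variable {q t : ℝ} (hq : 1 < q)
include hq

lemma one_sub_inv_pow_pos {n : ℕ} (hn : n ≠ 0) : 0 < 1 - q⁻¹ ^ n :=
  sub_pos.2 <| pow_lt_one₀ (by positivity) (inv_lt_one_of_one_lt₀ hq) hn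

lemma one_sub_inv_pow_le_mul_log (n : ℕ) : 1 - q⁻¹ ^ n ≤ n * log q := by
  have := log_le_sub_one_of_pos (pow_pos (inv_pos.2 (zero_lt_one.trans hq)) n)
  rw [log_pow, log_inv] at this
  linarith

lemma hasSum_qSeries (ht₀ : 0 ≤ t) (ht₁ : t < 1) :
    HasSum (fun k : ℕ => t ^ (k + 1) / (1 - q⁻¹ ^ (k + 1))) (qSeries q t) := by
  refine Summable.hasSum <| .of_nonneg_of_le (fun k => ?_) (fun k => ?_)
    (((summable_geometric_of_lt_one ht₀ ht₁).mul_left t).div_const (1 - q⁻¹))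
  · exact div_nonneg (by positivity) (one_sub_inv_pow_pos hq k.add_one_ne_zero).le
  · rw [pow_succ']
    gcongr
    · simpa using one_sub_inv_pow_pos hq one_ne_zero
    · exact pow_le_of_le_one (by positivity) (inv_le_one_of_one_le₀ hq.le) k.add_one_ne_zero

lemma qSeries_eq_add (ht₀ : 0 ≤ t) (ht₁ : t < 1) :
    qSeries q t = t / (1 - t) + qSeries q (t * q⁻¹) := by
  have hts : t * q⁻¹ < 1 := by
    nlinarith [inv_lt_one_of_one_lt₀ hq, inv_pos.2 (zero_lt_one.trans hq)]
  have h : HasSum (fun k : ℕ => t ^ (k + 1) / (1 - q⁻¹ ^ (k + 1)))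
      (t * (1 - t)⁻¹ + qSeries q (t * q⁻¹)) :=
    (((hasSum_geometric_of_lt_one ht₀ ht₁).mul_left t).add
      (hasSum_qSeries hq (by positivity) hts)).congr_fun fun k => by
        have hd := (one_sub_inv_pow_pos hq k.add_one_ne_zero).ne'
        rw [mul_pow, ← pow_succ']
        generalize q⁻¹ ^ (k + 1) = s at hd ⊢
        field_simp
        ring
  rw [← div_eq_mul_inv] at h
  exact h.tsum_eq

lemma log_one_sub_mul_inv_sub_log_one_sub_inv_le (ht₀ : 0 ≤ t) (ht₁ : t ≤ 1) :
    log (1 - t * q⁻¹) - log (1 - q⁻¹) ≤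
      log q * (qSeries q q⁻¹ - qSeries q (t * q⁻¹)) := by
  have hs₀ : 0 < q⁻¹ := inv_pos.2 (zero_lt_one.trans hq)
  have hs₁ : q⁻¹ < 1 := inv_lt_one_of_one_lt₀ hq
  have hts : t * q⁻¹ ≤ q⁻¹ := mul_le_of_le_one_left hs₀.le ht₁
  have hlog (u : ℝ) (hu₀ : 0 ≤ u) (hu₁ : u < 1) := hasSum_pow_div_log_of_abs_lt_one
    (show |u| < 1 by rwa [abs_of_nonneg hu₀])
  have h := hasSum_le (fun k : ℕ => ?_)
    ((hlog _ hs₀.le hs₁).sub (hlog _ (by positivity) (hts.trans_lt hs₁)))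
    (((hasSum_qSeries hq hs₀.le hs₁).sub
      (hasSum_qSeries hq (by positivity) (hts.trans_lt hs₁))).mul_left (log q))
  · linarith
  · have hd := one_sub_inv_pow_pos hq k.add_one_ne_zero
    have hle := one_sub_inv_pow_le_mul_log hq (k + 1)
    have hnum : 0 ≤ q⁻¹ ^ (k + 1) - (t * q⁻¹) ^ (k + 1) := sub_nonneg.2 (by gcongr)
    push_cast at hle
    rw [← sub_div, ← sub_div, mul_div_assoc', div_le_div_iff₀ (by positivity) hd]
    nlinarith [mul_le_mul_of_nonneg_left hle hnum]

lemma mul_one_sub_inv_div_lt_one_sub_exp_neg (ht₀ : 0 < t) (ht₁ : t < 1) :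
    t * (1 - q⁻¹) / (1 - t * q⁻¹) < 1 - exp (-(log q * t / (1 - t))) := by
  have h1t : 0 < 1 - t := sub_pos.2 ht₁
  have hL : 0 < log q := log_pos hq
  have hs₀ : 0 < q⁻¹ := inv_pos.2 (zero_lt_one.trans hq)
  have hs₁ : q⁻¹ < 1 := inv_lt_one_of_one_lt₀ hq
  have hsL : 1 - q⁻¹ < log q := by
    have := log_lt_sub_one_of_pos hs₀ (inv_lt_one_of_one_lt₀ hq).ne
    rw [log_inv] at this
    linarith
  set f := log q * t / (1 - t)
  have hf : 0 < f := by positivity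
  have hf1 : f * (1 - t) = log q * t := by simp only [f]; field_simp
  have hexp : f / (1 + f) ≤ 1 - exp (-f) := by
    rw [exp_neg, le_sub_comm, show 1 - f / (1 + f) = (1 + f)⁻¹ by field_simp; ring]
    exact inv_anti₀ (by positivity) (by linarith [add_one_le_exp f])
  refine lt_of_lt_of_le ?_ hexp
  rw [div_lt_div_iff₀ (by nlinarith) (by positivity)]
  nlinarith [mul_lt_mul_of_pos_left hsL ht₀]

lemma hasSum_pow_succ_mul_logToddDeriv (ht₀ : 0 ≤ t) (ht₁ : t < 1) :
    HasSum (fun k : ℕ => t ^ (k + 1) * (log q * logToddDeriv ((k + 1) * log q)))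
      (-log (1 - t) - log q * qSeries q (t * q⁻¹)) := by
  have hq₀ : 0 < q := zero_lt_one.trans hq
  have hL : 0 < log q := log_pos hq
  have hts : t * q⁻¹ < 1 := by
    nlinarith [inv_lt_one_of_one_lt₀ hq, inv_pos.2 hq₀]
  refine ((hasSum_pow_div_log_of_abs_lt_one (show |t| < 1 by rwa [abs_of_nonneg ht₀])).sub
    ((hasSum_qSeries hq (by positivity) hts).mul_left (log q))).congr_fun fun k => ?_
  have hexp : exp ((k + 1) * log q) = q ^ (k + 1) := by
    rw [← exp_log hq₀, ← exp_nat_mul, exp_log hq₀]; push_cast; ring_nf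
  have hd := (one_sub_inv_pow_pos hq k.add_one_ne_zero).ne'
  rw [logToddDeriv, hexp, mul_pow, inv_pow]
  field_simp

end Series

lemma log_exp_sub_one {y : ℝ} (hy : 0 < y) : log (exp y - 1) = y + log (1 - exp (-y)) := by
  rw [show exp y - 1 = exp y * (1 - exp (-y)) by rw [exp_neg]; field_simp,
    log_mul (exp_pos y).ne' (show 0 < 1 - exp (-y) by simpa using hy).ne', log_exp]

section Bounds

variable {q t : ℝ} (hq : 1 < q) (ht₀ : 0 < t) (ht₁ : t < 1)
include hq ht₀ ht₁

lemma log_exp_sub_one_lt_log_add_mul_qSeries :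
    log (exp (log q * t / (1 - t)) - 1) < log (log q) + log t + log q * qSeries q t := by
  have h1t : 0 < 1 - t := sub_pos.2 ht₁
  have hL : 0 < log q := log_pos hq
  have hf : 0 < log q * t / (1 - t) := by positivity
  have hlt := (hasSum_pow_succ_mul_logToddDeriv hq ht₀.le ht₁).tsum_eq ▸
    tsum_pow_succ_mul_logToddDeriv_lt hL ht₁ ht₀
  rw [logTodd, log_div (by positivity) h1t.ne', log_mul hL.ne' ht₀.ne'] at hlt
  rw [log_exp_sub_one hf, qSeries_eq_add hq ht₀.le ht₁]
  linarith [show log q * (t / (1 - t) + qSeries q (t * q⁻¹))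
    = log q * t / (1 - t) + log q * qSeries q (t * q⁻¹) by ring]

lemma log_add_mul_qSeries_sub_lt_log_exp_sub_one :
    log t + log q * (qSeries q t - qSeries q q⁻¹) < log (exp (log q * t / (1 - t)) - 1) := by
  have h1t : 0 < 1 - t := sub_pos.2 ht₁
  have hs : 0 < 1 - q⁻¹ := sub_pos.2 (inv_lt_one_of_one_lt₀ hq)
  have hts : 0 < 1 - t * q⁻¹ := by nlinarith [inv_pos.2 (zero_lt_one.trans hq)]
  have hf : 0 < log q * t / (1 - t) := by have := log_pos hq; positivity
  have hser := log_one_sub_mul_inv_sub_log_one_sub_inv_le hq ht₀.le ht₁.le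
  have hlog := log_lt_log (by positivity) (mul_one_sub_inv_div_lt_one_sub_exp_neg hq ht₀ ht₁)
  rw [log_div (by positivity) hts.ne', log_mul ht₀.ne' hs.ne'] at hlog
  rw [log_exp_sub_one hf, qSeries_eq_add hq ht₀.le ht₁]
  linarith [show log q * (t / (1 - t) + qSeries q (t * q⁻¹) - qSeries q q⁻¹)
    = log q * t / (1 - t) - log q * (qSeries q q⁻¹ - qSeries q (t * q⁻¹)) by ring]

end Bounds

end QDigamma

/-- For `q > 1` and `x > 0`, the double inequality bounding `ψ_q(x)`. -/
theorem qDigammaGt_double_inequality (q x : ℝ) (hq : 1 < q) (hx : 0 < x) :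
    qDigammaGt q 1 - Real.log q -
        Real.log (Real.exp (Real.log q / (q ^ x - 1)) - 1) < qDigammaGt q x ∧
    qDigammaGt q x <
      Real.log (Real.log q / (q - 1)) - Real.log q / 2 -
        Real.log (Real.exp (Real.log q / (q ^ x - 1)) - 1) := by
  have hq₀ : 0 < q := zero_lt_one.trans hq
  have ht₀ : 0 < q ^ (-x) := rpow_pos_of_pos hq₀ _
  have ht₁ : q ^ (-x) < 1 := rpow_lt_one_of_one_lt_of_neg hq (neg_neg_of_pos hx)
  have hfrac : log q / (q ^ x - 1) = log q * q ^ (-x) / (1 - q ^ (-x)) := by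
    rw [rpow_neg hq₀.le]
    have : q ^ x - 1 ≠ 0 := (sub_pos.2 (one_lt_rpow hq hx)).ne'
    field_simp
  have hlog : log (q ^ (-x)) = -(x * log q) := by rw [log_rpow hq₀]; ring
  have hlower := QDigamma.log_add_mul_qSeries_sub_lt_log_exp_sub_one hq ht₀ ht₁
  have hupper := QDigamma.log_exp_sub_one_lt_log_add_mul_qSeries hq ht₀ ht₁
  rw [hfrac, log_div (log_pos hq).ne' (sub_pos.2 hq).ne', QDigamma.qDigammaGt_eq_qSeries hq₀.le x,
    QDigamma.qDigammaGt_eq_qSeries hq₀.le 1, rpow_neg_one]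
  constructor <;> linarith
end

section
/- Let 0 < q < 1 and let Φ_q(x) = ψ_q(x) − (ln q)·x + ln(exp((ln q)·q^x/(q^x − 1)) − 1). Then lim_{x→0+} Φ_q(x) = ψ_q(1) and lim_{x→∞} Φ_q(x) = ln(ln q/(q − 1)); in particular, the constants ψ_q(1) and ln(ln q/(q − 1)) in the double inequality ψ_q(1) + (ln q)·x − ln(exp((ln q)·q^x/(q^x − 1)) − 1) < ψ_q(x) < ln(ln q/(q − 1)) + (ln q)·x − ln(exp((ln q)·q^x/(q^x − 1)) − 1) are best possible. -/
open Real Set Filter Topology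

/-!
Write `A(x) = ln q · q^x/(q^x − 1) > 0`, so that `Φ_q(x) = ψ_q(x) − x ln q + ln(e^{A(x)} − 1)`.

As `x → 0⁺`, `A(x) → ∞`; the functional equation `ψ_q(x + 1) = ψ_q(x) − A(x)` gives
`Φ_q(x) = ψ_q(x + 1) − x ln q + (ln(e^{A(x)} − 1) − A(x))`, and the last term tends to `0`,
while `ψ_q` is continuous at `1` by uniform convergence of its series on `[1, ∞)`.

As `x → ∞`, `A(x) → 0` and `ψ_q(x) → −ln(1 − q)` by dominated convergence; since
`ln A(x) = x ln q + ln(ln q/(q^x − 1))` we get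
`Φ_q(x) = ψ_q(x) + (ln(e^{A(x)} − 1) − ln A(x)) + ln(ln q/(q^x − 1)) → −ln(1 − q) + 0 + ln(−ln q)`.

The constants are best possible because they are the limits of `Φ_q` at the two ends.
-/

theorem tendsto_log_exp_sub_one_sub_self :
    Tendsto (fun y : ℝ => log (exp y - 1) - y) atTop (𝓝 0) := by
  have h : Tendsto (fun y : ℝ => log (1 - exp (-y))) atTop (𝓝 0) := by
    have h1 : Tendsto (fun y : ℝ => 1 - exp (-y)) atTop (𝓝 1) := by
      simpa using tendsto_exp_neg_atTop_nhds_zero.const_sub 1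
    simpa [Function.comp_def] using (continuousAt_log one_ne_zero).tendsto.comp h1
  refine h.congr' ?_
  filter_upwards [eventually_gt_atTop 0] with y hy
  have hexp : exp y - 1 = exp y * (1 - exp (-y)) := by
    rw [mul_sub, mul_one, ← exp_add, add_neg_cancel, exp_zero]
  have hpos : 0 < 1 - exp (-y) := sub_pos.2 (exp_lt_one_iff.2 (neg_neg_of_pos hy))
  rw [hexp, log_mul (exp_ne_zero y) hpos.ne', log_exp, add_sub_cancel_left]

theorem tendsto_log_exp_sub_one_sub_log :
    Tendsto (fun y : ℝ => log (exp y - 1) - log y) (𝓝[≠] 0) (𝓝 0) := by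
  have hslope : Tendsto (fun y : ℝ => (exp y - 1) / y) (𝓝[≠] 0) (𝓝 1) := by
    have h := hasDerivAt_iff_tendsto_slope.1 (hasDerivAt_exp 0)
    have hfun : slope exp 0 = fun y : ℝ => (exp y - 1) / y := by
      funext y; simp [slope_def_field]
    rwa [hfun, exp_zero] at h
  have h := ((continuousAt_log one_ne_zero).tendsto.comp hslope)
  rw [log_one] at h
  refine h.congr' ?_
  filter_upwards [self_mem_nhdsWithin] with y (hy : y ≠ 0)
  have hexp : exp y - 1 ≠ 0 := sub_ne_zero.2 (by simpa using hy)
  exact log_div hexp hy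

section QDigamma

variable {q : ℝ}

theorem rpow_succ_mul_eq_pow (hq0 : 0 ≤ q) (x : ℝ) (k : ℕ) :
    q ^ (((k : ℝ) + 1) * x) = (q ^ x) ^ (k + 1) := by
  rw [mul_comm, ← rpow_mul_natCast hq0]
  push_cast
  rfl

theorem summable_pow_succ_div_one_sub (hq0 : 0 ≤ q) (hq1 : q < 1) :
    Summable fun k : ℕ => q ^ (k + 1) / (1 - q) := by
  simp_rw [pow_succ]
  exact ((summable_geometric_of_lt_one hq0 hq1).mul_right q).div_const _

theorem norm_qDigammaLt_term_le (hq0 : 0 < q) (hq1 : q < 1) {x : ℝ} (hx : 1 ≤ x) (k : ℕ) :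
    ‖q ^ (((k : ℝ) + 1) * x) / (1 - q ^ (k + 1))‖ ≤ q ^ (k + 1) / (1 - q) := by
  have hpow : q ^ (k + 1) ≤ q := pow_le_of_le_one hq0.le hq1.le k.succ_ne_zero
  have hnum : q ^ (((k : ℝ) + 1) * x) ≤ q ^ (k + 1) := by
    rw [← rpow_natCast]
    push_cast
    exact rpow_le_rpow_of_exponent_ge hq0 hq1.le (le_mul_of_one_le_right (by positivity) hx)
  rw [norm_div, norm_of_nonneg (by positivity), norm_of_nonneg (by linarith)]
  exact div_le_div₀ (by positivity) hnum (by linarith) (by linarith)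

theorem continuousOn_qDigammaLt (hq0 : 0 < q) (hq1 : q < 1) :
    ContinuousOn (qDigammaLt q) (Ici 1) := by
  refine continuousOn_const.add (continuousOn_const.mul ?_)
  refine continuousOn_tsum (fun k => ?_) (summable_pow_succ_div_one_sub hq0.le hq1)
    fun k x hx => norm_qDigammaLt_term_le hq0 hq1 hx k
  exact ((continuous_const.rpow (by fun_prop) fun _ => Or.inl hq0.ne').div_const _).continuousOn

theorem tendsto_qDigammaLt_atTop (hq0 : 0 < q) (hq1 : q < 1) :
    Tendsto (qDigammaLt q) atTop (𝓝 (-log (1 - q))) := by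
  have hterm (k : ℕ) :
      Tendsto (fun x : ℝ => q ^ (((k : ℝ) + 1) * x) / (1 - q ^ (k + 1))) atTop (𝓝 0) := by
    simp_rw [rpow_succ_mul_eq_pow hq0.le]
    simpa using ((tendsto_rpow_atTop_of_base_lt_one q (by linarith) hq1).pow (k + 1)).div_const
      (1 - q ^ (k + 1))
  have hsum := tendsto_tsum_of_dominated_convergence (summable_pow_succ_div_one_sub hq0.le hq1)
    hterm (eventually_ge_atTop 1 |>.mono fun x hx k => norm_qDigammaLt_term_le hq0 hq1 hx k)
  rw [tsum_zero] at hsum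
  have h := (hsum.const_mul (log q)).const_add (-log (1 - q))
  rwa [mul_zero, add_zero] at h

theorem qDigammaLt_add_one (hq0 : 0 < q) (hq1 : q < 1) {x : ℝ} (hx : 0 < x) :
    qDigammaLt q (x + 1) = qDigammaLt q x - log q * q ^ x / (1 - q ^ x) := by
  have hqx0 : 0 ≤ q ^ x := rpow_nonneg hq0.le x
  have hqx1 : q ^ x < 1 := rpow_lt_one hq0.le hq1 hx
  have hgeom : HasSum (fun k : ℕ => q ^ (((k : ℝ) + 1) * x)) (q ^ x / (1 - q ^ x)) := by
    simp_rw [rpow_succ_mul_eq_pow hq0.le, pow_succ', div_eq_mul_inv]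
    exact (hasSum_geometric_of_lt_one hqx0 hqx1).mul_left _
  have hshift : Summable fun k : ℕ => q ^ (((k : ℝ) + 1) * (x + 1)) / (1 - q ^ (k + 1)) :=
    .of_norm_bounded (summable_pow_succ_div_one_sub hq0.le hq1)
      fun k => norm_qDigammaLt_term_le hq0 hq1 (by linarith) k
  have hterm (k : ℕ) : q ^ (((k : ℝ) + 1) * x) / (1 - q ^ (k + 1)) =
      q ^ (((k : ℝ) + 1) * x) + q ^ (((k : ℝ) + 1) * (x + 1)) / (1 - q ^ (k + 1)) := by
    have hne : 1 - q ^ (k + 1) ≠ 0 := (sub_pos.2 (pow_lt_one₀ hq0.le hq1 k.succ_ne_zero)).ne'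
    have hpow : q ^ (((k : ℝ) + 1) * (x + 1)) = q ^ (((k : ℝ) + 1) * x) * q ^ (k + 1) := by
      rw [mul_add, mul_one, rpow_add hq0]
      norm_cast
    rw [hpow]
    field_simp
    ring
  unfold qDigammaLt
  rw [tsum_congr hterm, hgeom.summable.tsum_add hshift, hgeom.tsum_eq]
  ring

end QDigamma

section QPhi

variable {q : ℝ}

noncomputable def qExpArg (q x : ℝ) : ℝ := log q * q ^ x / (q ^ x - 1)

noncomputable def qPhi (q x : ℝ) : ℝ :=
  qDigammaLt q x - log q * x + log (exp (qExpArg q x) - 1)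

theorem qExpArg_ne_zero (hq0 : 0 < q) (hq1 : q < 1) {x : ℝ} (hx : 0 < x) : qExpArg q x ≠ 0 :=
  div_ne_zero (mul_ne_zero (log_neg hq0 hq1).ne (rpow_pos_of_pos hq0 x).ne')
    (sub_ne_zero.2 (rpow_lt_one hq0.le hq1 hx).ne)

theorem tendsto_qExpArg_nhdsGT_zero (hq0 : 0 < q) (hq1 : q < 1) :
    Tendsto (qExpArg q) (𝓝[>] 0) atTop := by
  have hpow : Tendsto (fun x : ℝ => q ^ x) (𝓝[>] 0) (𝓝 1) := by
    simpa using ((continuousAt_const_rpow hq0.ne').tendsto (x := 0)).mono_left nhdsWithin_le_nhds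
  have hden : Tendsto (fun x : ℝ => 1 - q ^ x) (𝓝[>] 0) (𝓝[>] 0) := by
    refine tendsto_nhdsWithin_iff.2 ⟨by simpa using hpow.const_sub 1, ?_⟩
    filter_upwards [self_mem_nhdsWithin] with x (hx : 0 < x)
    exact sub_pos.2 (rpow_lt_one hq0.le hq1 hx)
  have hlog : 0 < -log q * 1 := by simpa using log_neg hq0 hq1
  refine ((hpow.const_mul (-log q)).pos_mul_atTop hlog
    (tendsto_inv_nhdsGT_zero.comp hden)).congr fun x => ?_
  simp only [qExpArg, Function.comp_apply]
  rw [← neg_sub 1 (q ^ x), div_neg]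
  ring

theorem tendsto_qExpArg_atTop (hq0 : 0 < q) (hq1 : q < 1) :
    Tendsto (qExpArg q) atTop (𝓝[≠] 0) := by
  have hpow := tendsto_rpow_atTop_of_base_lt_one q (by linarith) hq1
  refine tendsto_nhdsWithin_iff.2 ⟨?_, ?_⟩
  · show Tendsto (fun x => log q * q ^ x / (q ^ x - 1)) atTop (𝓝 0)
    simpa [Pi.div_def] using (hpow.const_mul (log q)).div (hpow.sub_const 1) (by norm_num)
  · filter_upwards [eventually_gt_atTop 0] with x hx
    exact qExpArg_ne_zero hq0 hq1 hx

theorem qPhi_eq_qDigammaLt_add_one (hq0 : 0 < q) (hq1 : q < 1) {x : ℝ} (hx : 0 < x) :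
    qPhi q x = qDigammaLt q (x + 1) - log q * x +
      (log (exp (qExpArg q x) - 1) - qExpArg q x) := by
  have hA : qExpArg q x = -(log q * q ^ x / (1 - q ^ x)) := by
    rw [qExpArg, ← neg_sub 1 (q ^ x), div_neg]
  rw [qPhi, qDigammaLt_add_one hq0 hq1 hx, hA]
  ring

theorem qPhi_eq_qDigammaLt_add_log (hq0 : 0 < q) (hq1 : q < 1) {x : ℝ} (hx : 0 < x) :
    qPhi q x = qDigammaLt q x + (log (exp (qExpArg q x) - 1) - log (qExpArg q x)) +
      log (log q / (q ^ x - 1)) := by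
  have hden : q ^ x - 1 ≠ 0 := sub_ne_zero.2 (rpow_lt_one hq0.le hq1 hx).ne
  have hlogA : log (qExpArg q x) = log (log q / (q ^ x - 1)) + log q * x := by
    rw [qExpArg, mul_comm, mul_div_assoc, log_mul (rpow_pos_of_pos hq0 x).ne'
      (div_ne_zero (log_neg hq0 hq1).ne hden), log_rpow hq0]
    ring
  rw [qPhi, hlogA]
  ring

theorem tendsto_qPhi_nhdsGT_zero (hq0 : 0 < q) (hq1 : q < 1) :
    Tendsto (qPhi q) (𝓝[>] 0) (𝓝 (qDigammaLt q 1)) := by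
  have hshift : Tendsto (fun x : ℝ => x + 1) (𝓝[>] 0) (𝓝[Ici 1] 1) := by
    refine tendsto_nhdsWithin_iff.2 ⟨?_, ?_⟩
    · simpa using ((continuous_add_const (1 : ℝ)).tendsto 0).mono_left nhdsWithin_le_nhds
    · filter_upwards [self_mem_nhdsWithin] with x (hx : 0 < x)
      simp only [mem_Ici]
      linarith
  have hψ := ((continuousOn_qDigammaLt hq0 hq1) 1 self_mem_Ici).tendsto.comp hshift
  have hlin : Tendsto (fun x : ℝ => log q * x) (𝓝[>] 0) (𝓝 0) := by
    simpa using ((continuous_const_mul (log q)).tendsto 0).mono_left nhdsWithin_le_nhds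
  have hexp := tendsto_log_exp_sub_one_sub_self.comp (tendsto_qExpArg_nhdsGT_zero hq0 hq1)
  have hsum := (hψ.sub hlin).add hexp
  rw [sub_zero, add_zero] at hsum
  refine hsum.congr' ?_
  filter_upwards [self_mem_nhdsWithin] with x (hx : 0 < x)
  exact (qPhi_eq_qDigammaLt_add_one hq0 hq1 hx).symm

theorem tendsto_qPhi_atTop (hq0 : 0 < q) (hq1 : q < 1) :
    Tendsto (qPhi q) atTop (𝓝 (log (log q / (q - 1)))) := by
  have hexp := tendsto_log_exp_sub_one_sub_log.comp (tendsto_qExpArg_atTop hq0 hq1)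
  have hlog : Tendsto (fun x : ℝ => log (log q / (q ^ x - 1))) atTop (𝓝 (log (-log q))) := by
    have hpow := tendsto_rpow_atTop_of_base_lt_one q (by linarith) hq1
    have h := (tendsto_const_nhds (x := log q)).div (hpow.sub_const 1) (by norm_num)
    rw [zero_sub, div_neg, div_one] at h
    exact (continuousAt_log (neg_ne_zero.2 (log_neg hq0 hq1).ne)).tendsto.comp h
  have hlim : log (log q / (q - 1)) = -log (1 - q) + 0 + log (-log q) := by
    rw [← neg_div_neg_eq, neg_sub, log_div (neg_ne_zero.2 (log_neg hq0 hq1).ne)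
      (sub_pos.2 hq1).ne']
    ring
  rw [hlim]
  refine ((tendsto_qDigammaLt_atTop hq0 hq1).add hexp |>.add hlog).congr' ?_
  filter_upwards [eventually_gt_atTop 0] with x hx
  exact (qPhi_eq_qDigammaLt_add_log hq0 hq1 hx).symm

end QPhi

/-- For `0 < q < 1`, `Φ_q(x) → ψ_q(1)` as `x → 0⁺` and `Φ_q(x) → ln(ln q/(q−1))`
as `x → ∞`; consequently, the constants `ψ_q(1)` and `ln(ln q/(q−1))` in the
double inequality are best possible. -/
theorem Phi_limits_best_possible (q : ℝ) (hq0 : 0 < q) (hq1 : q < 1) :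
    Tendsto
      (fun x => qDigammaLt q x - Real.log q * x +
        Real.log (Real.exp (Real.log q * q ^ x / (q ^ x - 1)) - 1))
      (𝓝[>] 0) (𝓝 (qDigammaLt q 1)) ∧
    Tendsto
      (fun x => qDigammaLt q x - Real.log q * x +
        Real.log (Real.exp (Real.log q * q ^ x / (q ^ x - 1)) - 1))
      atTop (𝓝 (Real.log (Real.log q / (q - 1)))) ∧
    (∀ a : ℝ,
      (∀ x : ℝ, 0 < x →
        a + Real.log q * x -
            Real.log (Real.exp (Real.log q * q ^ x / (q ^ x - 1)) - 1) < qDigammaLt q x) →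
      a ≤ qDigammaLt q 1) ∧
    (∀ b : ℝ,
      (∀ x : ℝ, 0 < x →
        qDigammaLt q x <
          b + Real.log q * x -
            Real.log (Real.exp (Real.log q * q ^ x / (q ^ x - 1)) - 1)) →
      Real.log (Real.log q / (q - 1)) ≤ b) := by
  have hzero := tendsto_qPhi_nhdsGT_zero hq0 hq1
  have htop := tendsto_qPhi_atTop hq0 hq1
  refine ⟨hzero, htop, fun a ha => ge_of_tendsto hzero ?_, fun b hb => le_of_tendsto htop ?_⟩
  · filter_upwards [self_mem_nhdsWithin] with x (hx : 0 < x)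
    have := ha x hx
    rw [qPhi, qExpArg]
    linarith
  · filter_upwards [eventually_gt_atTop 0] with x hx
    have := hb x hx
    rw [qPhi, qExpArg]
    linarith
end
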